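/- arXiv:2408.09903 — 9 statements merged into one kernel-verified Lean document; each statement's English description precedes it below -/
import Mathlib

section
/- Let m ≥ 1 be an integer. The map sending both generators x and t of E_{2m} to the residue class 1 in ℤ/2mℤ extends to a well-defined surjective group homomorphism φ : E_{2m} → ℤ/2mℤ which splits (a section is given by sending 1 to t, which is possible since t has order dividing 2m in E_{2m}), and the kernel of φ is isomorphic to the cyclically presented group Γ_{2m}. In particular, Γ_{2m} embeds as a normal subgroup of index 2m in E_{2m} and E_{2m} is a split extension Γ_{2m} ⋊ ℤ/2mℤ. -/
/-- Relators of the group `E_{2m} = ⟨x, t | t^{2m}, x² t^{m-3} x t^m⟩`,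
where the generator `x` is indexed by `true` and `t` by `false`. -/
def eRels (m : ℕ) : Set (FreeGroup Bool) :=
  {FreeGroup.of false ^ (2 * m),
   FreeGroup.of true ^ 2 * FreeGroup.of false ^ ((m : ℤ) - 3) * FreeGroup.of true *
     FreeGroup.of false ^ m}

/-- The group `E_{2m}`. -/
abbrev E (m : ℕ) := PresentedGroup (eRels m)

/-- Relators of the cyclically presented group
`Γ_{2m} = ⟨x_0, …, x_{2m-1} | x_i x_{i+1} x_{i+m-1} (0 ≤ i < 2m)⟩`, subscripts mod `2m`. -/
def gammaRels (m : ℕ) : Set (FreeGroup (ZMod (2 * m))) :=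
  {r | ∃ i : ZMod (2 * m),
    r = FreeGroup.of i * FreeGroup.of (i + 1) * FreeGroup.of (i + (m : ZMod (2 * m)) - 1)}

/-- The cyclically presented group `Γ_{2m}`. -/
abbrev Gamma (m : ℕ) := PresentedGroup (gammaRels m)

namespace Stmt0Aux

open PresentedGroup SemidirectProduct Multiplicative

lemma mk_rel_one {α : Type*} {rels : Set (FreeGroup α)} {r : FreeGroup α} (h : r ∈ rels) :
    PresentedGroup.mk rels r = 1 :=
  (QuotientGroup.eq_one_iff r).2 (Subgroup.subset_normalClosure h)

variable (m : ℕ) [NeZero m]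

instance : NeZero (2 * m) := ⟨Nat.mul_ne_zero two_ne_zero (NeZero.ne m)⟩

lemma intrep (a : ZMod (2 * m)) : ∃ z : ℤ, a = (z : ZMod (2 * m)) := by
  refine ⟨(a.val : ℤ), ?_⟩
  push_cast
  rw [ZMod.natCast_val, ZMod.cast_id]

/- ### The Gamma side -/

lemma gamma_rel (i : ZMod (2 * m)) :
    (PresentedGroup.of i * PresentedGroup.of (i + 1) *
      PresentedGroup.of (i + (m : ZMod (2 * m)) - 1) : Gamma m) = 1 := by
  have h := mk_rel_one (rels := gammaRels m)
    (r := FreeGroup.of i * FreeGroup.of (i + 1) *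
      FreeGroup.of (i + (m : ZMod (2 * m)) - 1)) ⟨i, rfl⟩
  rw [map_mul, map_mul] at h
  exact h

def shiftHom (k : ZMod (2 * m)) : Gamma m →* Gamma m :=
  PresentedGroup.toGroup (f := fun i => PresentedGroup.of (i + k)) (by
    rintro r ⟨i, rfl⟩
    rw [map_mul, map_mul, FreeGroup.lift_apply_of, FreeGroup.lift_apply_of, FreeGroup.lift_apply_of]
    have h := gamma_rel m (i + k)
    rw [show i + k + 1 = i + 1 + k by ring,
        show i + k + (m : ZMod (2 * m)) - 1 = i + (m : ZMod (2 * m)) - 1 + k by ring] at h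
    exact h)

@[simp] lemma shiftHom_of (k i : ZMod (2 * m)) :
    shiftHom m k (PresentedGroup.of i) = PresentedGroup.of (i + k) :=
  PresentedGroup.toGroup.of _

lemma shiftHom_shiftHom (k l : ZMod (2 * m)) (x : Gamma m) :
    shiftHom m k (shiftHom m l x) = shiftHom m (l + k) x := by
  have h : (shiftHom m k).comp (shiftHom m l) = shiftHom m (l + k) := by
    apply PresentedGroup.ext
    intro i
    simp [add_assoc]
  exact DFunLike.congr_fun h x

lemma shiftHom_zero (x : Gamma m) : shiftHom m 0 x = x := by
  have h : shiftHom m 0 = MonoidHom.id (Gamma m) := by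
    apply PresentedGroup.ext
    intro i
    simp
  rw [h]; rfl

def shiftEquiv (k : ZMod (2 * m)) : Gamma m ≃* Gamma m where
  toFun := shiftHom m k
  invFun := shiftHom m (-k)
  left_inv := fun x => by rw [shiftHom_shiftHom, add_neg_cancel, shiftHom_zero]
  right_inv := fun x => by rw [shiftHom_shiftHom, neg_add_cancel, shiftHom_zero]
  map_mul' := map_mul _

def act : Multiplicative (ZMod (2 * m)) →* MulAut (Gamma m) :=
  MonoidHom.mk' (fun k => shiftEquiv m k.toAdd) (fun a b => by
    ext x
    show shiftHom m (a.toAdd + b.toAdd) x = shiftHom m a.toAdd (shiftHom m b.toAdd x)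
    rw [shiftHom_shiftHom, add_comm])

@[simp] lemma act_of (k : Multiplicative (ZMod (2 * m))) (i : ZMod (2 * m)) :
    act m k (PresentedGroup.of i) = PresentedGroup.of (i + k.toAdd) :=
  shiftHom_of m _ i

/- ### The E side -/

def XX : E m := PresentedGroup.of true
def TT : E m := PresentedGroup.of false

lemma T_pow_eq_one : TT m ^ (2 * m) = 1 := by
  have h := mk_rel_one (rels := eRels m) (r := FreeGroup.of false ^ (2 * m))
    (Set.mem_insert _ _)
  rw [map_pow] at h
  exact h

lemma rel2 : XX m ^ 2 * TT m ^ ((m : ℤ) - 3) * XX m * TT m ^ ((m : ℤ)) = 1 := by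
  have h := mk_rel_one (rels := eRels m)
    (r := FreeGroup.of true ^ 2 * FreeGroup.of false ^ ((m : ℤ) - 3) * FreeGroup.of true *
      FreeGroup.of false ^ m) (Set.mem_insert_of_mem _ rfl)
  rw [map_mul, map_mul, map_mul, map_pow, map_zpow, map_pow] at h
  have h2 : XX m ^ 2 * TT m ^ ((m : ℤ) - 3) * XX m * TT m ^ (m : ℕ) = 1 := h
  rw [← zpow_natCast (TT m) m] at h2
  exact h2

lemma T_zpow_congr {a b : ℤ} (h : (a : ZMod (2 * m)) = (b : ZMod (2 * m))) :
    TT m ^ a = TT m ^ b := by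
  obtain ⟨c, hc⟩ : ((2 * m : ℕ) : ℤ) ∣ (a - b) := by
    rw [← ZMod.intCast_zmod_eq_zero_iff_dvd]
    push_cast
    rw [h]; ring
  have h1 : TT m ^ ((2 * m : ℕ) : ℤ) = 1 := by
    rw [zpow_natCast]; exact T_pow_eq_one m
  have h2 : TT m ^ (a - b) = 1 := by rw [hc, zpow_mul, h1, one_zpow]
  have h3 : a = b + (a - b) := by ring
  rw [h3, zpow_add, h2, mul_one]

lemma T_zpow_eq_one {a : ℤ} (h : (a : ZMod (2 * m)) = 0) : TT m ^ a = 1 := by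
  have := T_zpow_congr m (b := 0) (by simpa using h)
  simpa using this

def tE (a : ZMod (2 * m)) : E m := TT m ^ (a.val : ℤ)

lemma tE_eq (a : ZMod (2 * m)) (z : ℤ) (h : a = (z : ZMod (2 * m))) :
    tE m a = TT m ^ z := by
  apply T_zpow_congr
  have h2 : ((a.val : ℤ) : ZMod (2 * m)) = a := by
    push_cast
    rw [ZMod.natCast_val, ZMod.cast_id]
  rw [h2, h]

def sE : Multiplicative (ZMod (2 * m)) →* E m :=
  MonoidHom.mk' (fun k => tE m k.toAdd) (fun a b => by
    show tE m (a.toAdd + b.toAdd) = tE m a.toAdd * tE m b.toAdd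
    obtain ⟨x, hx⟩ := intrep m a.toAdd
    obtain ⟨y, hy⟩ := intrep m b.toAdd
    rw [tE_eq m _ (x + y) (by rw [hx, hy]; push_cast; ring), tE_eq m _ x hx,
      tE_eq m _ y hy, zpow_add])

lemma sE_apply (k : Multiplicative (ZMod (2 * m))) : sE m k = tE m k.toAdd := rfl

def ψ : Gamma m →* E m :=
  PresentedGroup.toGroup (f := fun i => tE m i * XX m * (tE m (i + 1))⁻¹) (by
    rintro r ⟨i, rfl⟩
    obtain ⟨a, ha⟩ := intrep m i
    rw [map_mul, map_mul, FreeGroup.lift_apply_of, FreeGroup.lift_apply_of, FreeGroup.lift_apply_of]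
    rw [tE_eq m i a ha,
        tE_eq m (i + 1) (a + 1) (by rw [ha]; push_cast; ring),
        tE_eq m (i + 1 + 1) (a + 2) (by rw [ha]; push_cast; ring),
        tE_eq m (i + (m : ZMod (2 * m)) - 1) (a + (m : ℤ) - 1) (by rw [ha]; push_cast; ring),
        tE_eq m (i + (m : ZMod (2 * m)) - 1 + 1) (a + (m : ℤ)) (by rw [ha]; push_cast; ring)]
    have key : TT m ^ a * XX m * (TT m ^ (a + 1))⁻¹ *
        (TT m ^ (a + 1) * XX m * (TT m ^ (a + 2))⁻¹) *
        (TT m ^ (a + (m : ℤ) - 1) * XX m * (TT m ^ (a + (m : ℤ)))⁻¹) =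
        TT m ^ a * (XX m * XX m * TT m ^ ((m : ℤ) - 3) * XX m * TT m ^ ((m : ℤ))) *
          TT m ^ (-(m : ℤ)) * (TT m ^ (a + (m : ℤ)))⁻¹ := by
      group
    have hrel := rel2 m
    rw [sq] at hrel
    rw [key, hrel, mul_one]
    have key2 : TT m ^ a * TT m ^ (-(m : ℤ)) * (TT m ^ (a + (m : ℤ)))⁻¹ =
        TT m ^ (a + -(m : ℤ) + -(a + (m : ℤ))) := by
      group
    rw [key2]
    apply T_zpow_eq_one
    have hz : ((2 * m : ℕ) : ZMod (2 * m)) = 0 := ZMod.natCast_self _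
    push_cast at hz ⊢
    linear_combination -hz)

lemma ψ_of (i : ZMod (2 * m)) :
    ψ m (PresentedGroup.of i) = tE m i * XX m * (tE m (i + 1))⁻¹ :=
  PresentedGroup.toGroup.of _

lemma compat (k : Multiplicative (ZMod (2 * m))) :
    (ψ m).comp ((act m k).toMonoidHom) =
      (MulAut.conj (sE m k)).toMonoidHom.comp (ψ m) := by
  apply PresentedGroup.ext
  intro i
  simp only [MonoidHom.comp_apply, MulEquiv.coe_toMonoidHom, act_of, MulAut.conj_apply]
  rw [ψ_of, ψ_of, sE_apply]
  obtain ⟨a, ha⟩ := intrep m i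
  obtain ⟨c, hc⟩ := intrep m k.toAdd
  rw [tE_eq m _ (a + c) (by rw [ha, hc]; push_cast; ring),
      tE_eq m (i + k.toAdd + 1) (a + c + 1) (by rw [ha, hc]; push_cast; ring),
      tE_eq m i a ha, tE_eq m (i + 1) (a + 1) (by rw [ha]; push_cast; ring),
      tE_eq m k.toAdd c hc]
  group

/- ### The semidirect product and the isomorphism -/

abbrev Gm := Gamma m ⋊[act m] Multiplicative (ZMod (2 * m))

def τm : Multiplicative (ZMod (2 * m)) := Multiplicative.ofAdd 1

lemma tau_pow_2m : τm m ^ (2 * m) = 1 := by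
  apply Multiplicative.toAdd.injective
  simp [τm, toAdd_pow, nsmul_eq_mul, ZMod.natCast_self]

def fE : Bool → Gm m := fun b =>
  if b then inl (PresentedGroup.of 0) * inr (τm m) else inr (τm m)

lemma eHom_rels : ∀ r ∈ eRels m, FreeGroup.lift (fE m) r = 1 := by
  rintro r (rfl | rfl)
  · rw [map_pow, FreeGroup.lift_apply_of]
    simp only [fE, if_neg Bool.false_ne_true]
    rw [← map_pow, tau_pow_2m, map_one]
  · rw [map_mul, map_mul, map_mul, map_pow, map_zpow, map_pow,
      FreeGroup.lift_apply_of, FreeGroup.lift_apply_of]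
    simp only [fE, if_neg Bool.false_ne_true, if_pos rfl]
    rw [← map_zpow, ← map_pow, sq]
    ext
    · simp only [↓reduceIte, τm, mul_left, left_inl, right_inl, map_one, left_inr,
        MulAut.one_apply, mul_one, mul_right, right_inr, one_mul, act_of, toAdd_ofAdd,
        zero_add, map_mul, MulAut.mul_apply, one_left, toAdd_mul, toAdd_zpow, toAdd_pow]
      have h := gamma_rel m 0
      simp only [zero_add] at h
      rw [show ((m : ℤ) - 3) • (1 : ZMod (2 * m)) + 1 + 1 = (m : ZMod (2 * m)) - 1 by
        rw [zsmul_eq_mul]; push_cast; ring]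
      exact h
    · simp only [↓reduceIte, τm, mul_left, left_inl, right_inl, map_one, left_inr,
        MulAut.one_apply, mul_one, mul_right, right_inr, one_mul, act_of, toAdd_ofAdd,
        zero_add, map_mul, MulAut.mul_apply, one_left, toAdd_mul, toAdd_zpow, toAdd_pow,
        one_right]
      apply Multiplicative.toAdd.injective
      simp only [toAdd_mul, toAdd_zpow, toAdd_pow, toAdd_ofAdd, toAdd_one, zsmul_eq_mul,
        nsmul_eq_mul, mul_one]
      have hz : ((2 * m : ℕ) : ZMod (2 * m)) = 0 := ZMod.natCast_self _
      push_cast at hz ⊢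
      show (1 + 1 + ((m : ZMod (2 * m)) - 3) + 1 + (m : ZMod (2 * m)) : ZMod (2 * m)) =
        (0 : ZMod (2 * m))
      linear_combination hz

def eHom : E m →* Gm m := PresentedGroup.toGroup (eHom_rels m)

lemma eHom_X : eHom m (XX m) = inl (PresentedGroup.of 0) * inr (τm m) := by
  show eHom m (PresentedGroup.of true) = _
  rw [eHom, PresentedGroup.toGroup.of]
  simp [fE]

lemma eHom_T : eHom m (TT m) = inr (τm m) := by
  show eHom m (PresentedGroup.of false) = _
  rw [eHom, PresentedGroup.toGroup.of]
  simp [fE]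

def ΘHom : Gm m →* E m := SemidirectProduct.lift (ψ m) (sE m) (compat m)

lemma ΘHom_eHom : (ΘHom m).comp (eHom m) = MonoidHom.id (E m) := by
  apply PresentedGroup.ext
  intro b
  cases b
  · show ΘHom m (eHom m (TT m)) = TT m
    rw [eHom_T, ΘHom, SemidirectProduct.lift_inr, sE_apply, τm, toAdd_ofAdd,
      tE_eq m 1 1 (by norm_cast), zpow_one]
  · show ΘHom m (eHom m (XX m)) = XX m
    rw [eHom_X, map_mul, ΘHom, SemidirectProduct.lift_inr, SemidirectProduct.lift_inl,
      sE_apply, τm, toAdd_ofAdd, ψ_of, tE_eq m 0 0 (by norm_cast),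
      tE_eq m (0 + 1) 1 (by norm_num), tE_eq m 1 1 (by norm_cast)]
    group

lemma tau_zpow (c : ℤ) : τm m ^ c = Multiplicative.ofAdd ((c : ZMod (2 * m))) := by
  apply Multiplicative.toAdd.injective
  simp [τm, toAdd_zpow, zsmul_eq_mul]

lemma eHom_sE (k : Multiplicative (ZMod (2 * m))) :
    eHom m (sE m k) = inr k := by
  obtain ⟨c, hc⟩ := intrep m k.toAdd
  rw [sE_apply, tE_eq m _ c hc, map_zpow, eHom_T, ← map_zpow, tau_zpow]
  congr 1
  rw [← hc, ofAdd_toAdd]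

lemma eHom_ΘHom : (eHom m).comp (ΘHom m) = MonoidHom.id (Gm m) := by
  apply SemidirectProduct.hom_ext
  · apply PresentedGroup.ext
    intro i
    obtain ⟨a, ha⟩ := intrep m i
    show eHom m (ΘHom m (inl (PresentedGroup.of i))) = inl (PresentedGroup.of i)
    rw [ΘHom, SemidirectProduct.lift_inl, ψ_of, tE_eq m i a ha,
      tE_eq m (i + 1) (a + 1) (by rw [ha]; push_cast; ring)]
    rw [map_mul, map_mul, map_inv, map_zpow, map_zpow, eHom_T, eHom_X,
      ← map_zpow, ← map_zpow, tau_zpow, tau_zpow]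
    ext
    · simp [mul_left, mul_right, ha]
    · simp only [mul_right, right_inl, right_inr, one_mul, mul_one, one_right]
      apply Multiplicative.toAdd.injective
      simp [τm]
  · apply MonoidHom.ext
    intro k
    show eHom m (ΘHom m (inr k)) = inr k
    rw [ΘHom, SemidirectProduct.lift_inr, eHom_sE]

def eIso : E m ≃* Gm m :=
  MonoidHom.toMulEquiv (eHom m) (ΘHom m) (ΘHom_eHom m) (eHom_ΘHom m)

end Stmt0Aux

/-- The map sending both generators `x, t` of `E_{2m}` to `1 ∈ ℤ/2mℤ` extends to a
well-defined surjective homomorphism `φ` which splits (with a section sending `1` to `t`),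
whose kernel is isomorphic to `Γ_{2m}`; in particular the kernel is a normal subgroup
of index `2m`, so `E_{2m}` is a split extension `Γ_{2m} ⋊ ℤ/2mℤ`. -/
theorem stmt0 (m : ℕ) (hm : 1 ≤ m) :
    ∃ φ : E m →* Multiplicative (ZMod (2 * m)),
      φ (PresentedGroup.of true) = Multiplicative.ofAdd (1 : ZMod (2 * m)) ∧
      φ (PresentedGroup.of false) = Multiplicative.ofAdd (1 : ZMod (2 * m)) ∧
      Function.Surjective φ ∧
      (∃ s : Multiplicative (ZMod (2 * m)) →* E m,
        φ.comp s = MonoidHom.id (Multiplicative (ZMod (2 * m))) ∧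
        s (Multiplicative.ofAdd (1 : ZMod (2 * m))) = PresentedGroup.of false) ∧
      φ.ker.Normal ∧ φ.ker.index = 2 * m ∧
      Nonempty (φ.ker ≃* Gamma m) := by
  haveI : NeZero m := ⟨by omega⟩
  open Stmt0Aux SemidirectProduct in
  have hesurj : Function.Surjective (Stmt0Aux.eHom m) := (Stmt0Aux.eIso m).surjective
  have hsurj : Function.Surjective (SemidirectProduct.rightHom.comp (Stmt0Aux.eHom m)) := by
    rw [MonoidHom.coe_comp]
    exact SemidirectProduct.rightHom_surjective.comp hesurj
  open Stmt0Aux SemidirectProduct in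
  refine ⟨SemidirectProduct.rightHom.comp (eHom m), ?_, ?_, hsurj, ?_, inferInstance, ?_, ?_⟩
  case _ =>
    show SemidirectProduct.rightHom (eHom m (XX m)) = _
    rw [eHom_X, map_mul, rightHom_inl, rightHom_inr, one_mul]
    rfl
  case _ =>
    show SemidirectProduct.rightHom (eHom m (TT m)) = _
    rw [eHom_T, rightHom_inr]
    rfl
  case _ =>
    refine ⟨sE m, ?_, ?_⟩
    · apply MonoidHom.ext
      intro k
      show SemidirectProduct.rightHom (eHom m (sE m k)) = k
      rw [eHom_sE, rightHom_inr]
    · rw [sE_apply, toAdd_ofAdd, tE_eq m 1 1 (by norm_num), zpow_one]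
      rfl
  case _ =>
    rw [Subgroup.index_ker, MonoidHom.range_eq_top.2 hsurj, Subgroup.card_top,
      Nat.card_congr Multiplicative.toAdd, Nat.card_zmod]
  case _ =>
    have hker : (SemidirectProduct.rightHom.comp (eHom m)).ker =
        (SemidirectProduct.rightHom (φ := act m)).ker.comap (eHom m) :=
      (MonoidHom.comap_ker _ _).symm
    have hcoe : ((eIso m : E m →* Gm m)) = eHom m := MonoidHom.ext fun x => rfl
    have hmap : ((SemidirectProduct.rightHom.comp (eHom m)).ker).map (eHom m) =
        (SemidirectProduct.rightHom (φ := act m)).ker := by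
      rw [hker]
      exact Subgroup.map_comap_eq_self_of_surjective hesurj _
    refine ⟨((MulEquiv.subgroupMap (eIso m) _).trans (MulEquiv.subgroupCongr ?_)).trans
      ((MonoidHom.ofInjective SemidirectProduct.inl_injective).symm)⟩
    rw [hcoe, hmap]
    exact (SemidirectProduct.range_inl_eq_ker_rightHom (φ := act m)).symm
end

section
/- Let m ≥ 1 be an integer, and in the group E_{2m} set A = x t^{-3} and B = t^m x t^{m+3} x t^{m-3}. Then A and B commute in E_{2m}, i.e. A·B = B·A. -/
lemma mk_rel_one' {m : ℕ} {r : FreeGroup Bool} (hr : r ∈ eRels m) :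
    PresentedGroup.mk (eRels m) r = 1 :=
  (QuotientGroup.eq_one_iff r).mpr (Subgroup.subset_normalClosure hr)

/-- The elements `A = x t⁻³` and `B = t^m x t^{m+3} x t^{m-3}` commute in `E_{2m}`. -/
theorem stmt2 (m : ℕ) (hm : 1 ≤ m)
    (x t : E m) (hx : x = PresentedGroup.of true) (ht : t = PresentedGroup.of false)
    (A B : E m) (hA : A = x * t ^ (-3 : ℤ))
    (hB : B = t ^ m * x * t ^ (m + 3) * x * t ^ ((m : ℤ) - 3)) :
    A * B = B * A := by
  set M : ℤ := (m : ℤ) with hM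
  -- relator 1 : t ^ (2m) = 1, as zpow
  have H0 : t ^ (2 * M) = 1 := by
    have h := mk_rel_one' (m := m) (Set.mem_insert _ _)
    rw [hx, ht] at *
    simpa [← zpow_natCast, hM, PresentedGroup.of] using h
  -- relator 2
  have hrel : x^2 * t ^ (M - 3) * x * t ^ M = 1 := by
    have h := mk_rel_one' (m := m) (Set.mem_insert_iff.mpr (Or.inr rfl))
    rw [hx, ht]
    have h' : (PresentedGroup.of true : E m) ^ 2
        * (PresentedGroup.of false : E m) ^ ((m:ℤ)-3)
        * PresentedGroup.of true * (PresentedGroup.of false : E m) ^ m = 1 := by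
      simpa [PresentedGroup.of] using h
    rw [← zpow_natCast (PresentedGroup.of false : E m) m] at h'
    exact h'
  -- key identity h1 : t^M x t^M = t^3 (x x)⁻¹
  have h1 : t ^ M * x * t ^ M = t ^ (3:ℤ) * (x^2)⁻¹ := by
    calc t ^ M * x * t ^ M
        = t ^ (3:ℤ) * (x^2)⁻¹ * (x^2 * t ^ (M - 3) * x * t ^ M) := by group
      _ = t ^ (3:ℤ) * (x^2)⁻¹ := by rw [hrel]; group
  -- S1 : t^M x⁻¹ t^M = x x t⁻³
  have S1 : t ^ M * x⁻¹ * t ^ M = x^2 * t ^ (-3:ℤ) := by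
    calc t ^ M * x⁻¹ * t ^ M
        = t ^ (2*M) * (t ^ M * x * t ^ M)⁻¹ * t ^ (2*M) := by group
      _ = 1 * (t ^ (3:ℤ) * (x^2)⁻¹)⁻¹ * 1 := by rw [h1, H0]
      _ = x^2 * t ^ (-3:ℤ) := by group
  -- S : x = t^3 x² t⁻³ x² t⁻³
  have S : x = t ^ (3:ℤ) * (x^2) * t ^ (-3:ℤ) * (x^2) * t ^ (-3:ℤ) := by
    calc x = t ^ (-M) * (t ^ M * x * t ^ M) * t ^ (-M) := by group
      _ = t ^ (-M) * (t ^ (3:ℤ) * (x^2)⁻¹) * t ^ (-M) := by rw [h1]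
      _ = t ^ (3:ℤ) * (t ^ (2*M))⁻¹ * (t ^ M * x⁻¹ * t ^ M) * (t ^ (2*M))⁻¹
            * (t ^ M * x⁻¹ * t ^ M) * (t ^ (2*M))⁻¹ := by group
      _ = t ^ (3:ℤ) * (1:E m)⁻¹ * (x^2 * t ^ (-3:ℤ)) * (1:E m)⁻¹
            * (x^2 * t ^ (-3:ℤ)) * (1:E m)⁻¹ := by rw [S1, H0]
      _ = t ^ (3:ℤ) * (x^2) * t ^ (-3:ℤ) * (x^2) * t ^ (-3:ℤ) := by group
  -- D : x⁻¹ t³ x² = t³ x⁻² t³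
  have hW : x * (t ^ (3:ℤ) * (x^2) * t ^ (-3:ℤ) * (x^2) * t ^ (-3:ℤ))⁻¹ = 1 := by
    rw [← S]; group
  have D : x⁻¹ * t ^ (3:ℤ) * (x^2) = t ^ (3:ℤ) * (x^2)⁻¹ * t ^ (3:ℤ) := by
    calc x⁻¹ * t ^ (3:ℤ) * (x^2)
        = (t ^ (3:ℤ) * (x^2)⁻¹ * t ^ (3:ℤ))
          * ((x^2)⁻¹ * t ^ (-3:ℤ)
            * (x * (t ^ (3:ℤ) * (x^2) * t ^ (-3:ℤ) * (x^2) * t ^ (-3:ℤ))⁻¹)⁻¹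
            * t ^ (3:ℤ) * (x^2)) := by group
      _ = _ := by rw [hW]; group
  -- rewrite B with integer powers
  have hB' : B = t ^ M * x * t ^ (M + 3) * x * t ^ (M - 3) := by
    rw [hB, ← zpow_natCast t m, ← zpow_natCast t (m + 3)]
    push_cast
    rfl
  rw [hA, hB']
  have hAB : (x * t ^ (-3:ℤ)) * (t ^ M * x * t ^ (M+3) * x * t ^ (M-3))
      = x⁻¹ * t ^ (3:ℤ) * x * t ^ (M-3) := by
    calc (x * t ^ (-3:ℤ)) * (t ^ M * x * t ^ (M+3) * x * t ^ (M-3))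
        = (x * t ^ (-3:ℤ)) * ((t ^ M * x * t ^ M) * t ^ (3:ℤ) * x * t ^ (M-3)) := by group
      _ = (x * t ^ (-3:ℤ)) * ((t ^ (3:ℤ) * (x^2)⁻¹) * t ^ (3:ℤ) * x * t ^ (M-3)) := by rw [h1]
      _ = x⁻¹ * t ^ (3:ℤ) * x * t ^ (M-3) := by group
  have hBA : (t ^ M * x * t ^ (M+3) * x * t ^ (M-3)) * (x * t ^ (-3:ℤ))
      = t ^ (3:ℤ) * (x^2)⁻¹ * t ^ (3:ℤ) * x⁻¹ * t ^ (-3:ℤ) * t ^ M := by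
    calc (t ^ M * x * t ^ (M+3) * x * t ^ (M-3)) * (x * t ^ (-3:ℤ))
        = (t ^ M * x * t ^ M) * t ^ (3:ℤ) * x * t ^ (-3:ℤ)
            * (t ^ M * x * t ^ M) * t ^ (-3:ℤ) * t ^ M * (t ^ (2*M))⁻¹ := by group
      _ = (t ^ (3:ℤ) * (x^2)⁻¹) * t ^ (3:ℤ) * x * t ^ (-3:ℤ)
            * (t ^ (3:ℤ) * (x^2)⁻¹) * t ^ (-3:ℤ) * t ^ M * (1:E m)⁻¹ := by rw [h1, H0]
      _ = t ^ (3:ℤ) * (x^2)⁻¹ * t ^ (3:ℤ) * x⁻¹ * t ^ (-3:ℤ) * t ^ M := by group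
  rw [hAB, hBA]
  calc x⁻¹ * t ^ (3:ℤ) * x * t ^ (M-3)
      = (x⁻¹ * t ^ (3:ℤ) * (x^2)) * (x⁻¹ * t ^ (M-3)) := by group
    _ = (t ^ (3:ℤ) * (x^2)⁻¹ * t ^ (3:ℤ)) * (x⁻¹ * t ^ (M-3)) := by rw [D]
    _ = t ^ (3:ℤ) * (x^2)⁻¹ * t ^ (3:ℤ) * x⁻¹ * t ^ (-3:ℤ) * t ^ M := by group
end

section
/- The group Γ_8, i.e. the cyclically presented group with 8 generators x_0, …, x_7 and relators x_i x_{i+1} x_{i+3} (0 ≤ i < 8, subscripts modulo 8), contains a subgroup isomorphic to ℤ × ℤ (a free abelian subgroup of rank 2). -/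
noncomputable section Gamma8Aux

/-- Generators of `Γ₈`. -/
private def x (i : ZMod (2 * 4)) : Gamma 4 := PresentedGroup.of i

private lemma xrel (a b c : ZMod (2 * 4)) (hb : b = a + 1)
    (hc : c = a + ((4 : ℕ) : ZMod (2 * 4)) - 1) : x a * x b * x c = 1 := by
  subst hb hc
  have hmem : FreeGroup.of a * FreeGroup.of (a + 1) *
      FreeGroup.of (a + ((4 : ℕ) : ZMod (2 * 4)) - 1) ∈ gammaRels 4 := ⟨a, rfl⟩
  have h1 : (PresentedGroup.mk (gammaRels 4)) (FreeGroup.of a * FreeGroup.of (a + 1) *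
      FreeGroup.of (a + ((4 : ℕ) : ZMod (2 * 4)) - 1)) = 1 :=
    (QuotientGroup.eq_one_iff _).mpr (Subgroup.subset_normalClosure hmem)
  simpa [x, PresentedGroup.of, map_mul] using h1

/-- A primitive cube root of unity. -/
private noncomputable def ω : ℂ := ⟨-1/2, Real.sqrt 3 / 2⟩

private lemma hω : ω ^ 2 = -1 - ω := by
  have h3 : Real.sqrt 3 ^ 2 = 3 := Real.sq_sqrt (by norm_num)
  apply Complex.ext <;>
    simp [ω, pow_two, Complex.mul_re, Complex.mul_im] <;> nlinarith [h3]

private lemma hωim : ω.im ≠ 0 := by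
  have : (0:ℝ) < Real.sqrt 3 := Real.sqrt_pos.mpr (by norm_num)
  simp only [ω]
  positivity

private lemma hω0 : ω ≠ 0 := fun h => hωim (by rw [h]; simp)

private lemma hω2 : (-1-ω : ℂ) ≠ 0 := by
  intro h
  apply hωim
  have h1 : ω = -1 := by linear_combination -h
  rw [h1]
  simp

private lemma hω1 : (1 : ℂ) ≠ 0 := one_ne_zero

/-- The affine map `z ↦ a z + c` as a permutation of `ℂ`. -/
private noncomputable def aff (a c : ℂ) (ha : a ≠ 0) : Equiv.Perm ℂ :=
  (Equiv.mulLeft₀ a ha).trans (Equiv.addRight c)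

private lemma aff_apply (a c : ℂ) (ha : a ≠ 0) (z : ℂ) : aff a c ha z = a * z + c := rfl

private lemma aff_mul (a c b d : ℂ) (ha : a ≠ 0) (hb : b ≠ 0) :
    aff a c ha * aff b d hb = aff (a * b) (a * d + c) (mul_ne_zero ha hb) := by
  ext z
  simp only [Equiv.Perm.mul_apply, aff_apply]
  ring

private lemma aff_congr {a c b d : ℂ} {ha : a ≠ 0} {hb : b ≠ 0}
    (h1 : a = b) (h2 : c = d) : aff a c ha = aff b d hb := by
  subst h1; subst h2; rfl

private lemma aff_one : aff 1 0 one_ne_zero = 1 := by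
  ext z
  simp [aff_apply]

private lemma aff_eq_one {a c : ℂ} {ha : a ≠ 0} (h1 : a = 1) (h2 : c = 0) :
    aff a c ha = 1 := by
  rw [aff_congr h1 h2 (hb := one_ne_zero)]
  exact aff_one

private lemma aff_inv (a c b d : ℂ) (ha : a ≠ 0) (hb : b ≠ 0)
    (h1 : a * b = 1) (h2 : a * d + c = 0) : (aff a c ha)⁻¹ = aff b d hb := by
  apply inv_eq_of_mul_eq_one_right
  rw [aff_mul]
  exact aff_eq_one h1 h2

/-- First affine representation data. -/
private noncomputable def gen1 : ZMod (2 * 4) → Equiv.Perm ℂ :=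
  ![aff 1 ω hω1, aff ω (-ω) hω0, aff (-1-ω) (-ω) hω2, aff (-1-ω) 0 hω2,
    aff 1 (-1) hω1, aff (-1-ω) 1 hω2, aff ω 1 hω0, aff ω 0 hω0]

/-- Second affine representation data. -/
private noncomputable def gen2 : ZMod (2 * 4) → Equiv.Perm ℂ :=
  ![aff ω (-1-ω) hω0, aff 1 (-1) hω1, aff ω (-ω) hω0, aff (-1-ω) (1-ω) hω2,
    aff (-1-ω) (-ω) hω2, aff 1 (-1-ω) hω1, aff (-1-ω) 1 hω2, aff ω 0 hω0]

private lemma index_simp : ∀ i : ZMod (2 * 4), i + ((4:ℕ) : ZMod (2 * 4)) - 1 = i + 3 := by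
  decide

private lemma hgen1 : ∀ r ∈ gammaRels 4, FreeGroup.lift gen1 r = 1 := by
  rintro r ⟨i, rfl⟩
  rw [index_simp i]
  simp only [map_mul, FreeGroup.lift_apply_of]
  fin_cases i
  · show aff 1 (ω) hω1 * aff ω (-ω) hω0 * aff (-1-ω) (0) hω2 = 1
    rw [aff_mul, aff_mul]
    exact aff_eq_one (by linear_combination (-1) * hω)
      (by linear_combination (0) * hω)
  · show aff ω (-ω) hω0 * aff (-1-ω) (-ω) hω2 * aff 1 (-1) hω1 = 1
    rw [aff_mul, aff_mul]
    exact aff_eq_one (by linear_combination (-1) * hω)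
      (by linear_combination (0) * hω)
  · show aff (-1-ω) (-ω) hω2 * aff (-1-ω) (0) hω2 * aff (-1-ω) (1) hω2 = 1
    rw [aff_mul, aff_mul]
    exact aff_eq_one (by linear_combination ((-2-ω)) * hω)
      (by linear_combination (1) * hω)
  · show aff (-1-ω) (0) hω2 * aff 1 (-1) hω1 * aff ω (1) hω0 = 1
    rw [aff_mul, aff_mul]
    exact aff_eq_one (by linear_combination (-1) * hω)
      (by linear_combination (0) * hω)
  · show aff 1 (-1) hω1 * aff (-1-ω) (1) hω2 * aff ω (0) hω0 = 1
    rw [aff_mul, aff_mul]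
    exact aff_eq_one (by linear_combination (-1) * hω)
      (by linear_combination (0) * hω)
  · show aff (-1-ω) (1) hω2 * aff ω (1) hω0 * aff 1 (ω) hω1 = 1
    rw [aff_mul, aff_mul]
    exact aff_eq_one (by linear_combination (-1) * hω)
      (by linear_combination (-ω) * hω)
  · show aff ω (1) hω0 * aff ω (0) hω0 * aff ω (-ω) hω0 = 1
    rw [aff_mul, aff_mul]
    exact aff_eq_one (by linear_combination ((-1+ω)) * hω)
      (by linear_combination ((1-ω)) * hω)
  · show aff ω (0) hω0 * aff 1 (ω) hω1 * aff (-1-ω) (-ω) hω2 = 1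
    rw [aff_mul, aff_mul]
    exact aff_eq_one (by linear_combination (-1) * hω)
      (by linear_combination (0) * hω)

private lemma hgen2 : ∀ r ∈ gammaRels 4, FreeGroup.lift gen2 r = 1 := by
  rintro r ⟨i, rfl⟩
  rw [index_simp i]
  simp only [map_mul, FreeGroup.lift_apply_of]
  fin_cases i
  · show aff ω ((-1-ω)) hω0 * aff 1 (-1) hω1 * aff (-1-ω) ((1-ω)) hω2 = 1
    rw [aff_mul, aff_mul]
    exact aff_eq_one (by linear_combination (-1) * hω)
      (by linear_combination (-1) * hω)
  · show aff 1 (-1) hω1 * aff ω (-ω) hω0 * aff (-1-ω) (-ω) hω2 = 1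
    rw [aff_mul, aff_mul]
    exact aff_eq_one (by linear_combination (-1) * hω)
      (by linear_combination (-1) * hω)
  · show aff ω (-ω) hω0 * aff (-1-ω) ((1-ω)) hω2 * aff 1 ((-1-ω)) hω1 = 1
    rw [aff_mul, aff_mul]
    exact aff_eq_one (by linear_combination (-1) * hω)
      (by linear_combination (ω) * hω)
  · show aff (-1-ω) ((1-ω)) hω2 * aff (-1-ω) (-ω) hω2 * aff (-1-ω) (1) hω2 = 1
    rw [aff_mul, aff_mul]
    exact aff_eq_one (by linear_combination ((-2-ω)) * hω)
      (by linear_combination (2) * hω)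
  · show aff (-1-ω) (-ω) hω2 * aff 1 ((-1-ω)) hω1 * aff ω (0) hω0 = 1
    rw [aff_mul, aff_mul]
    exact aff_eq_one (by linear_combination (-1) * hω)
      (by linear_combination (1) * hω)
  · show aff 1 ((-1-ω)) hω1 * aff (-1-ω) (1) hω2 * aff ω ((-1-ω)) hω0 = 1
    rw [aff_mul, aff_mul]
    exact aff_eq_one (by linear_combination (-1) * hω)
      (by linear_combination (1) * hω)
  · show aff (-1-ω) (1) hω2 * aff ω (0) hω0 * aff 1 (-1) hω1 = 1
    rw [aff_mul, aff_mul]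
    exact aff_eq_one (by linear_combination (-1) * hω)
      (by linear_combination (1) * hω)
  · show aff ω (0) hω0 * aff ω ((-1-ω)) hω0 * aff ω (-ω) hω0 = 1
    rw [aff_mul, aff_mul]
    exact aff_eq_one (by linear_combination ((-1+ω)) * hω)
      (by linear_combination (-ω) * hω)

end Gamma8Aux

set_option maxHeartbeats 2000000 in
/-- The group `Γ_8` (the case `m = 4`) contains a free abelian subgroup of rank 2,
i.e. a subgroup isomorphic to `ℤ × ℤ`. -/
theorem stmt7 :
    ∃ H : Subgroup (Gamma 4), Nonempty (H ≃* Multiplicative (ℤ × ℤ)) := by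
  have r0 : x 0 * x 1 * x 3 = 1 := xrel 0 1 3 (by decide) (by decide)
  have r1 : x 1 * x 2 * x 4 = 1 := xrel 1 2 4 (by decide) (by decide)
  have r2 : x 2 * x 3 * x 5 = 1 := xrel 2 3 5 (by decide) (by decide)
  have r3 : x 3 * x 4 * x 6 = 1 := xrel 3 4 6 (by decide) (by decide)
  have r4 : x 4 * x 5 * x 7 = 1 := xrel 4 5 7 (by decide) (by decide)
  have r5 : x 5 * x 6 * x 0 = 1 := xrel 5 6 0 (by decide) (by decide)
  have r6 : x 6 * x 7 * x 1 = 1 := xrel 6 7 1 (by decide) (by decide)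
  have r7 : x 7 * x 0 * x 2 = 1 := xrel 7 0 2 (by decide) (by decide)
  have t0 : x 5 * x 7 * x 4 = 1 := by
    calc x 5 * x 7 * x 4 = (x 4)⁻¹ * (x 4 * x 5 * x 7) * x 4 := by group
    _ = 1 := by rw [r4]; group
  have t1 : (x 7)⁻¹ * (x 5)⁻¹ * (x 4)⁻¹ = 1 := by
    calc (x 7)⁻¹ * (x 5)⁻¹ * (x 4)⁻¹ = (x 4 * x 5 * x 7)⁻¹ := by group
    _ = 1 := by rw [r4]; group
  have t2 : x 7 * x 1 * x 6 = 1 := by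
    calc x 7 * x 1 * x 6 = (x 6)⁻¹ * (x 6 * x 7 * x 1) * x 6 := by group
    _ = 1 := by rw [r6]; group
  have t3 : (x 1)⁻¹ * (x 4)⁻¹ * (x 2)⁻¹ = 1 := by
    calc (x 1)⁻¹ * (x 4)⁻¹ * (x 2)⁻¹ = (x 1)⁻¹ * (x 1 * x 2 * x 4)⁻¹ * x 1 := by group
    _ = 1 := by rw [r1]; group
  have t4 : (x 6)⁻¹ * (x 5)⁻¹ * (x 0)⁻¹ = 1 := by
    calc (x 6)⁻¹ * (x 5)⁻¹ * (x 0)⁻¹ = x 0 * (x 5 * x 6 * x 0)⁻¹ * (x 0)⁻¹ := by group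
    _ = 1 := by rw [r5]; group
  have t5 : x 5 * x 2 * x 3 = 1 := by
    calc x 5 * x 2 * x 3 = (x 2 * x 3)⁻¹ * (x 2 * x 3 * x 5) * (x 2 * x 3) := by group
    _ = 1 := by rw [r2]; group
  have t6 : (x 3)⁻¹ * (x 1)⁻¹ * (x 0)⁻¹ = 1 := by
    calc (x 3)⁻¹ * (x 1)⁻¹ * (x 0)⁻¹ = (x 0 * x 1 * x 3)⁻¹ := by group
    _ = 1 := by rw [r0]; group
  have t7 : (x 5)⁻¹ * (x 3)⁻¹ * (x 2)⁻¹ = 1 := by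
    calc (x 5)⁻¹ * (x 3)⁻¹ * (x 2)⁻¹ = (x 2 * x 3 * x 5)⁻¹ := by group
    _ = 1 := by rw [r2]; group
  have t8 : x 3 * x 4 * x 6 = 1 := r3
  have t9 : (x 6)⁻¹ * (x 1)⁻¹ * (x 7)⁻¹ = 1 := by
    calc (x 6)⁻¹ * (x 1)⁻¹ * (x 7)⁻¹ = (x 6)⁻¹ * (x 6 * x 7 * x 1)⁻¹ * x 6 := by group
    _ = 1 := by rw [r6]; group
  have t10 : x 0 * x 2 * x 7 = 1 := by
    calc x 0 * x 2 * x 7 = (x 7)⁻¹ * (x 7 * x 0 * x 2) * x 7 := by group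
    _ = 1 := by rw [r7]; group
  have h0 : x 7 * x 5 * x 7 * (x 1)⁻¹ * (x 5)⁻¹ * (x 7)⁻¹ * (x 5)⁻¹ * (x 1)⁻¹ * (x 5)⁻¹ * (x 7)⁻¹ * (x 5)⁻¹ * (x 1)⁻¹ = 1 := by
    calc x 7 * x 5 * x 7 * (x 1)⁻¹ * (x 5)⁻¹ * (x 7)⁻¹ * (x 5)⁻¹ * (x 1)⁻¹ * (x 5)⁻¹ * (x 7)⁻¹ * (x 5)⁻¹ * (x 1)⁻¹
        _ = (x 7) * (x 5 * x 7 * x 4) * (x 7)⁻¹ * (x 7 * (x 4)⁻¹ * (x 1)⁻¹ * (x 5)⁻¹ * (x 7)⁻¹ * (x 5)⁻¹ * (x 1)⁻¹ * (x 5)⁻¹ * (x 7)⁻¹ * (x 5)⁻¹ * (x 1)⁻¹) := by simp only [one_mul, mul_one, mul_inv_rev, inv_inv, inv_one, mul_assoc, inv_mul_cancel_left, mul_inv_cancel_left, inv_mul_cancel, mul_inv_cancel]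
        _ = x 7 * (x 4)⁻¹ * (x 1)⁻¹ * (x 5)⁻¹ * (x 7)⁻¹ * (x 5)⁻¹ * (x 1)⁻¹ * (x 5)⁻¹ * (x 7)⁻¹ * (x 5)⁻¹ * (x 1)⁻¹ := by rw [t0]; try simp only [one_mul, mul_one, mul_inv_rev, inv_inv, inv_one, mul_assoc, inv_mul_cancel_left, mul_inv_cancel_left, inv_mul_cancel, mul_inv_cancel]
        _ = (x 7 * (x 4)⁻¹ * (x 1)⁻¹ * (x 5)⁻¹) * ((x 7)⁻¹ * (x 5)⁻¹ * (x 4)⁻¹) * (x 7 * (x 4)⁻¹ * (x 1)⁻¹ * (x 5)⁻¹)⁻¹ * (x 7 * (x 4)⁻¹ * (x 1)⁻¹ * (x 5)⁻¹ * x 4 * (x 1)⁻¹ * (x 5)⁻¹ * (x 7)⁻¹ * (x 5)⁻¹ * (x 1)⁻¹) := by simp only [one_mul, mul_one, mul_inv_rev, inv_inv, inv_one, mul_assoc, inv_mul_cancel_left, mul_inv_cancel_left, inv_mul_cancel, mul_inv_cancel]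
        _ = x 7 * (x 4)⁻¹ * (x 1)⁻¹ * (x 5)⁻¹ * x 4 * (x 1)⁻¹ * (x 5)⁻¹ * (x 7)⁻¹ * (x 5)⁻¹ * (x 1)⁻¹ := by rw [t1]; try simp only [one_mul, mul_one, mul_inv_rev, inv_inv, inv_one, mul_assoc, inv_mul_cancel_left, mul_inv_cancel_left, inv_mul_cancel, mul_inv_cancel]
        _ = (x 7 * (x 4)⁻¹ * (x 1)⁻¹ * (x 5)⁻¹ * x 4 * (x 1)⁻¹ * (x 5)⁻¹) * ((x 7)⁻¹ * (x 5)⁻¹ * (x 4)⁻¹) * (x 7 * (x 4)⁻¹ * (x 1)⁻¹ * (x 5)⁻¹ * x 4 * (x 1)⁻¹ * (x 5)⁻¹)⁻¹ * (x 7 * (x 4)⁻¹ * (x 1)⁻¹ * (x 5)⁻¹ * x 4 * (x 1)⁻¹ * (x 5)⁻¹ * x 4 * (x 1)⁻¹) := by simp only [one_mul, mul_one, mul_inv_rev, inv_inv, inv_one, mul_assoc, inv_mul_cancel_left, mul_inv_cancel_left, inv_mul_cancel, mul_inv_cancel]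
        _ = x 7 * (x 4)⁻¹ * (x 1)⁻¹ * (x 5)⁻¹ * x 4 * (x 1)⁻¹ * (x 5)⁻¹ * x 4 * (x 1)⁻¹ := by rw [t1]; try simp only [one_mul, mul_one, mul_inv_rev, inv_inv, inv_one, mul_assoc, inv_mul_cancel_left, mul_inv_cancel_left, inv_mul_cancel, mul_inv_cancel]
        _ = (x 7 * x 1 * x 6) * ((x 6)⁻¹ * (x 1)⁻¹ * (x 4)⁻¹ * (x 1)⁻¹ * (x 5)⁻¹ * x 4 * (x 1)⁻¹ * (x 5)⁻¹ * x 4 * (x 1)⁻¹) := by simp only [one_mul, mul_one, mul_inv_rev, inv_inv, inv_one, mul_assoc, inv_mul_cancel_left, mul_inv_cancel_left, inv_mul_cancel, mul_inv_cancel]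
        _ = (x 6)⁻¹ * (x 1)⁻¹ * (x 4)⁻¹ * (x 1)⁻¹ * (x 5)⁻¹ * x 4 * (x 1)⁻¹ * (x 5)⁻¹ * x 4 * (x 1)⁻¹ := by rw [t2]; try simp only [one_mul, mul_one, mul_inv_rev, inv_inv, inv_one, mul_assoc, inv_mul_cancel_left, mul_inv_cancel_left, inv_mul_cancel, mul_inv_cancel]
        _ = ((x 6)⁻¹) * ((x 1)⁻¹ * (x 4)⁻¹ * (x 2)⁻¹) * ((x 6)⁻¹)⁻¹ * ((x 6)⁻¹ * x 2 * (x 1)⁻¹ * (x 5)⁻¹ * x 4 * (x 1)⁻¹ * (x 5)⁻¹ * x 4 * (x 1)⁻¹) := by simp only [one_mul, mul_one, mul_inv_rev, inv_inv, inv_one, mul_assoc, inv_mul_cancel_left, mul_inv_cancel_left, inv_mul_cancel, mul_inv_cancel]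
        _ = (x 6)⁻¹ * x 2 * (x 1)⁻¹ * (x 5)⁻¹ * x 4 * (x 1)⁻¹ * (x 5)⁻¹ * x 4 * (x 1)⁻¹ := by rw [t3]; try simp only [one_mul, mul_one, mul_inv_rev, inv_inv, inv_one, mul_assoc, inv_mul_cancel_left, mul_inv_cancel_left, inv_mul_cancel, mul_inv_cancel]
        _ = ((x 6)⁻¹ * (x 5)⁻¹ * (x 0)⁻¹) * (x 0 * x 5 * x 2 * (x 1)⁻¹ * (x 5)⁻¹ * x 4 * (x 1)⁻¹ * (x 5)⁻¹ * x 4 * (x 1)⁻¹) := by simp only [one_mul, mul_one, mul_inv_rev, inv_inv, inv_one, mul_assoc, inv_mul_cancel_left, mul_inv_cancel_left, inv_mul_cancel, mul_inv_cancel]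
        _ = x 0 * x 5 * x 2 * (x 1)⁻¹ * (x 5)⁻¹ * x 4 * (x 1)⁻¹ * (x 5)⁻¹ * x 4 * (x 1)⁻¹ := by rw [t4]; try simp only [one_mul, mul_one, mul_inv_rev, inv_inv, inv_one, mul_assoc, inv_mul_cancel_left, mul_inv_cancel_left, inv_mul_cancel, mul_inv_cancel]
        _ = (x 0) * (x 5 * x 2 * x 3) * (x 0)⁻¹ * (x 0 * (x 3)⁻¹ * (x 1)⁻¹ * (x 5)⁻¹ * x 4 * (x 1)⁻¹ * (x 5)⁻¹ * x 4 * (x 1)⁻¹) := by simp only [one_mul, mul_one, mul_inv_rev, inv_inv, inv_one, mul_assoc, inv_mul_cancel_left, mul_inv_cancel_left, inv_mul_cancel, mul_inv_cancel]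
        _ = x 0 * (x 3)⁻¹ * (x 1)⁻¹ * (x 5)⁻¹ * x 4 * (x 1)⁻¹ * (x 5)⁻¹ * x 4 * (x 1)⁻¹ := by rw [t5]; try simp only [one_mul, mul_one, mul_inv_rev, inv_inv, inv_one, mul_assoc, inv_mul_cancel_left, mul_inv_cancel_left, inv_mul_cancel, mul_inv_cancel]
        _ = (x 0) * ((x 3)⁻¹ * (x 1)⁻¹ * (x 0)⁻¹) * (x 0)⁻¹ * (x 0 * x 0 * (x 5)⁻¹ * x 4 * (x 1)⁻¹ * (x 5)⁻¹ * x 4 * (x 1)⁻¹) := by simp only [one_mul, mul_one, mul_inv_rev, inv_inv, inv_one, mul_assoc, inv_mul_cancel_left, mul_inv_cancel_left, inv_mul_cancel, mul_inv_cancel]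
        _ = x 0 * x 0 * (x 5)⁻¹ * x 4 * (x 1)⁻¹ * (x 5)⁻¹ * x 4 * (x 1)⁻¹ := by rw [t6]; try simp only [one_mul, mul_one, mul_inv_rev, inv_inv, inv_one, mul_assoc, inv_mul_cancel_left, mul_inv_cancel_left, inv_mul_cancel, mul_inv_cancel]
        _ = (x 0 * x 0) * ((x 5)⁻¹ * (x 3)⁻¹ * (x 2)⁻¹) * (x 0 * x 0)⁻¹ * (x 0 * x 0 * x 2 * x 3 * x 4 * (x 1)⁻¹ * (x 5)⁻¹ * x 4 * (x 1)⁻¹) := by simp only [one_mul, mul_one, mul_inv_rev, inv_inv, inv_one, mul_assoc, inv_mul_cancel_left, mul_inv_cancel_left, inv_mul_cancel, mul_inv_cancel]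
        _ = x 0 * x 0 * x 2 * x 3 * x 4 * (x 1)⁻¹ * (x 5)⁻¹ * x 4 * (x 1)⁻¹ := by rw [t7]; try simp only [one_mul, mul_one, mul_inv_rev, inv_inv, inv_one, mul_assoc, inv_mul_cancel_left, mul_inv_cancel_left, inv_mul_cancel, mul_inv_cancel]
        _ = (x 0 * x 0 * x 2) * (x 3 * x 4 * x 6) * (x 0 * x 0 * x 2)⁻¹ * (x 0 * x 0 * x 2 * (x 6)⁻¹ * (x 1)⁻¹ * (x 5)⁻¹ * x 4 * (x 1)⁻¹) := by simp only [one_mul, mul_one, mul_inv_rev, inv_inv, inv_one, mul_assoc, inv_mul_cancel_left, mul_inv_cancel_left, inv_mul_cancel, mul_inv_cancel]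
        _ = x 0 * x 0 * x 2 * (x 6)⁻¹ * (x 1)⁻¹ * (x 5)⁻¹ * x 4 * (x 1)⁻¹ := by rw [t8]; try simp only [one_mul, mul_one, mul_inv_rev, inv_inv, inv_one, mul_assoc, inv_mul_cancel_left, mul_inv_cancel_left, inv_mul_cancel, mul_inv_cancel]
        _ = (x 0 * x 0 * x 2) * ((x 6)⁻¹ * (x 1)⁻¹ * (x 7)⁻¹) * (x 0 * x 0 * x 2)⁻¹ * (x 0 * x 0 * x 2 * x 7 * (x 5)⁻¹ * x 4 * (x 1)⁻¹) := by simp only [one_mul, mul_one, mul_inv_rev, inv_inv, inv_one, mul_assoc, inv_mul_cancel_left, mul_inv_cancel_left, inv_mul_cancel, mul_inv_cancel]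
        _ = x 0 * x 0 * x 2 * x 7 * (x 5)⁻¹ * x 4 * (x 1)⁻¹ := by rw [t9]; try simp only [one_mul, mul_one, mul_inv_rev, inv_inv, inv_one, mul_assoc, inv_mul_cancel_left, mul_inv_cancel_left, inv_mul_cancel, mul_inv_cancel]
        _ = (x 0) * (x 0 * x 2 * x 7) * (x 0)⁻¹ * (x 0 * (x 5)⁻¹ * x 4 * (x 1)⁻¹) := by simp only [one_mul, mul_one, mul_inv_rev, inv_inv, inv_one, mul_assoc, inv_mul_cancel_left, mul_inv_cancel_left, inv_mul_cancel, mul_inv_cancel]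
        _ = x 0 * (x 5)⁻¹ * x 4 * (x 1)⁻¹ := by rw [t10]; try simp only [one_mul, mul_one, mul_inv_rev, inv_inv, inv_one, mul_assoc, inv_mul_cancel_left, mul_inv_cancel_left, inv_mul_cancel, mul_inv_cancel]
        _ = (x 0) * ((x 5)⁻¹ * (x 3)⁻¹ * (x 2)⁻¹) * (x 0)⁻¹ * (x 0 * x 2 * x 3 * x 4 * (x 1)⁻¹) := by simp only [one_mul, mul_one, mul_inv_rev, inv_inv, inv_one, mul_assoc, inv_mul_cancel_left, mul_inv_cancel_left, inv_mul_cancel, mul_inv_cancel]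
        _ = x 0 * x 2 * x 3 * x 4 * (x 1)⁻¹ := by rw [t7]; try simp only [one_mul, mul_one, mul_inv_rev, inv_inv, inv_one, mul_assoc, inv_mul_cancel_left, mul_inv_cancel_left, inv_mul_cancel, mul_inv_cancel]
        _ = (x 0 * x 2) * (x 3 * x 4 * x 6) * (x 0 * x 2)⁻¹ * (x 0 * x 2 * (x 6)⁻¹ * (x 1)⁻¹) := by simp only [one_mul, mul_one, mul_inv_rev, inv_inv, inv_one, mul_assoc, inv_mul_cancel_left, mul_inv_cancel_left, inv_mul_cancel, mul_inv_cancel]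
        _ = x 0 * x 2 * (x 6)⁻¹ * (x 1)⁻¹ := by rw [t8]; try simp only [one_mul, mul_one, mul_inv_rev, inv_inv, inv_one, mul_assoc, inv_mul_cancel_left, mul_inv_cancel_left, inv_mul_cancel, mul_inv_cancel]
        _ = (x 0 * x 2) * ((x 6)⁻¹ * (x 1)⁻¹ * (x 7)⁻¹) * (x 0 * x 2)⁻¹ * (x 0 * x 2 * x 7) := by simp only [one_mul, mul_one, mul_inv_rev, inv_inv, inv_one, mul_assoc, inv_mul_cancel_left, mul_inv_cancel_left, inv_mul_cancel, mul_inv_cancel]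
        _ = x 0 * x 2 * x 7 := by rw [t9]; try simp only [one_mul, mul_one, mul_inv_rev, inv_inv, inv_one, mul_assoc, inv_mul_cancel_left, mul_inv_cancel_left, inv_mul_cancel, mul_inv_cancel]
        _ = (x 0 * x 2 * x 7) := by simp only [one_mul, mul_one, mul_inv_rev, inv_inv, inv_one, mul_assoc, inv_mul_cancel_left, mul_inv_cancel_left, inv_mul_cancel, mul_inv_cancel]
        _ = 1 := by rw [t10]; try simp only [one_mul, mul_one, mul_inv_rev, inv_inv, inv_one, mul_assoc, inv_mul_cancel_left, mul_inv_cancel_left, inv_mul_cancel, mul_inv_cancel]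

  -- the key relation:  x7 x5 x7 x1⁻¹ = (x1 x5 x7 x5)²
  have hkey : x 7 * x 5 * x 7 * (x 1)⁻¹ = (x 1 * x 5 * x 7 * x 5) * (x 1 * x 5 * x 7 * x 5) := by
    have h1 : (x 7 * x 5 * x 7 * (x 1)⁻¹) *
        ((x 1 * x 5 * x 7 * x 5) * (x 1 * x 5 * x 7 * x 5))⁻¹ = 1 := by
      calc (x 7 * x 5 * x 7 * (x 1)⁻¹) *
          ((x 1 * x 5 * x 7 * x 5) * (x 1 * x 5 * x 7 * x 5))⁻¹
          = x 7 * x 5 * x 7 * (x 1)⁻¹ * (x 5)⁻¹ * (x 7)⁻¹ * (x 5)⁻¹ * (x 1)⁻¹ *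
            (x 5)⁻¹ * (x 7)⁻¹ * (x 5)⁻¹ * (x 1)⁻¹ := by simp only [one_mul, mul_one, mul_inv_rev, inv_inv, inv_one, mul_assoc, inv_mul_cancel_left, mul_inv_cancel_left, inv_mul_cancel, mul_inv_cancel]
        _ = 1 := h0
    exact mul_inv_eq_one.mp h1
  -- A = (x1 x5 x7 x5)³ commutes with F = x1 x5
  have hcomm : ((x 1 * x 5 * x 7 * x 5) * (x 1 * x 5 * x 7 * x 5) * (x 1 * x 5 * x 7 * x 5)) *
      (x 1 * x 5) = (x 1 * x 5) *
      ((x 1 * x 5 * x 7 * x 5) * (x 1 * x 5 * x 7 * x 5) * (x 1 * x 5 * x 7 * x 5)) := by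
    calc ((x 1 * x 5 * x 7 * x 5) * (x 1 * x 5 * x 7 * x 5) * (x 1 * x 5 * x 7 * x 5)) *
        (x 1 * x 5)
        = (x 1 * x 5 * x 7 * x 5) * ((x 1 * x 5 * x 7 * x 5) * (x 1 * x 5 * x 7 * x 5)) *
          (x 1 * x 5) := by simp only [one_mul, mul_one, mul_inv_rev, inv_inv, inv_one, mul_assoc, inv_mul_cancel_left, mul_inv_cancel_left, inv_mul_cancel, mul_inv_cancel]
      _ = (x 1 * x 5 * x 7 * x 5) * (x 7 * x 5 * x 7 * (x 1)⁻¹) * (x 1 * x 5) := by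
          rw [← hkey]
      _ = (x 1 * x 5) * ((x 7 * x 5 * x 7 * (x 1)⁻¹) * (x 1 * x 5 * x 7 * x 5)) := by simp only [one_mul, mul_one, mul_inv_rev, inv_inv, inv_one, mul_assoc, inv_mul_cancel_left, mul_inv_cancel_left, inv_mul_cancel, mul_inv_cancel]
      _ = (x 1 * x 5) * ((x 1 * x 5 * x 7 * x 5) * (x 1 * x 5 * x 7 * x 5) *
          (x 1 * x 5 * x 7 * x 5)) := by rw [hkey]; try simp only [one_mul, mul_one, mul_inv_rev, inv_inv, inv_one, mul_assoc, inv_mul_cancel_left, mul_inv_cancel_left, inv_mul_cancel, mul_inv_cancel]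
  set F : Gamma 4 := x 1 * x 5 with hF
  set A : Gamma 4 := (x 1 * x 5 * x 7 * x 5) * (x 1 * x 5 * x 7 * x 5) * (x 1 * x 5 * x 7 * x 5)
    with hA
  have hAF : Commute A F := hcomm
  -- homomorphisms to `Equiv.Perm ℂ`
  have hφ₁x : ∀ i, (PresentedGroup.toGroup hgen1) (x i) = gen1 i := fun i =>
    PresentedGroup.toGroup.of hgen1
  have hφ₂x : ∀ i, (PresentedGroup.toGroup hgen2) (x i) = gen2 i := fun i =>
    PresentedGroup.toGroup.of hgen2
  -- image computations
  have hg1F : (PresentedGroup.toGroup hgen1) F = 1 := by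
    rw [hF, map_mul, hφ₁x, hφ₁x]
    show aff ω (-ω) hω0 * aff (-1-ω) 1 hω2 = 1
    rw [aff_mul]
    exact aff_eq_one (by linear_combination (-1) * hω) (by ring)
  have hg1P : (PresentedGroup.toGroup hgen1) (x 1 * x 5 * x 7 * x 5) = aff 1 ω hω1 := by
    simp only [map_mul, hφ₁x]
    show aff ω (-ω) hω0 * aff (-1-ω) 1 hω2 * aff ω 0 hω0 * aff (-1-ω) 1 hω2 = _
    rw [aff_mul, aff_mul, aff_mul]
    exact aff_congr (by linear_combination (-1 + ω + ω^2) * hω) (by linear_combination (-ω) * hω)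
  have hg1A : (PresentedGroup.toGroup hgen1) A = aff 1 (3 * ω) hω1 := by
    rw [hA, map_mul, map_mul, hg1P]
    rw [aff_mul, aff_mul]
    exact aff_congr (by ring) (by ring)
  have hg2F : (PresentedGroup.toGroup hgen2) F = aff 1 (-2 - ω) hω1 := by
    rw [hF, map_mul, hφ₂x, hφ₂x]
    show aff 1 (-1) hω1 * aff 1 (-1-ω) hω1 = _
    rw [aff_mul]
    exact aff_congr (by ring) (by ring)
  -- powers of translations
  have transpow : ∀ (c : ℂ) (n : ℤ), (aff 1 c hω1) ^ n = aff 1 ((n : ℂ) * c) hω1 := by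
    intro c n
    induction n using Int.induction_on with
    | zero => rw [zpow_zero]; exact (aff_eq_one rfl (by push_cast; ring)).symm
    | succ k ih =>
        rw [zpow_add_one, ih, aff_mul]
        exact aff_congr (by ring) (by push_cast; ring)
    | pred k ih =>
        rw [zpow_sub_one, ih]
        have hinv : (aff 1 c hω1)⁻¹ = aff 1 (-c) hω1 := by
          rw [aff_inv 1 c 1 (-c) hω1 hω1 (by ring) (by ring)]
        rw [hinv, aff_mul]
        exact aff_congr (by ring) (by push_cast; ring)
  have htr : ∀ (c : ℂ) (n : ℤ), aff 1 ((n : ℂ) * c) hω1 = 1 → (n : ℂ) * c = 0 := by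
    intro c n h
    have := congrArg (fun (e : Equiv.Perm ℂ) => e 0) h
    simpa [aff_apply] using this
  -- injectivity
  have hker : ∀ m n : ℤ, A ^ m * F ^ n = 1 → m = 0 ∧ n = 0 := by
    intro m n h
    have h1 := congrArg (PresentedGroup.toGroup hgen1) h
    simp only [map_mul, map_zpow, map_one, hg1A, hg1F, one_zpow, mul_one] at h1
    rw [transpow] at h1
    have hm0 : (m : ℂ) * (3 * ω) = 0 := htr _ _ h1
    have hm : m = 0 := by
      rcases mul_eq_zero.mp hm0 with h' | h'
      · exact_mod_cast h'
      · exact absurd h' (by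
          intro hc
          rcases mul_eq_zero.mp hc with h'' | h''
          · norm_num at h''
          · exact hω0 h'')
    refine ⟨hm, ?_⟩
    rw [hm, zpow_zero, one_mul] at h
    have h2 := congrArg (PresentedGroup.toGroup hgen2) h
    simp only [map_zpow, map_one, hg2F] at h2
    rw [transpow] at h2
    have hn0 : (n : ℂ) * (-2 - ω) = 0 := htr _ _ h2
    rcases mul_eq_zero.mp hn0 with h' | h'
    · exact_mod_cast h'
    · exfalso
      apply hωim
      have h1 : ω = -2 := by linear_combination -h'
      rw [h1]
      simp
  -- build the monoid hom from ℤ × ℤ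
  have hcommz : ∀ m n : ℤ, F ^ n * A ^ m = A ^ m * F ^ n := fun m n =>
    ((hAF.symm).zpow_zpow n m).eq
  let g : Multiplicative (ℤ × ℤ) →* Gamma 4 :=
  { toFun := fun p => A ^ (Multiplicative.toAdd p).1 * F ^ (Multiplicative.toAdd p).2
    map_one' := by simp
    map_mul' := by
      intro p q
      simp only [toAdd_mul, Prod.fst_add, Prod.snd_add, zpow_add]
      calc A ^ (Multiplicative.toAdd p).1 * A ^ (Multiplicative.toAdd q).1 *
            (F ^ (Multiplicative.toAdd p).2 * F ^ (Multiplicative.toAdd q).2)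
          = A ^ (Multiplicative.toAdd p).1 * (A ^ (Multiplicative.toAdd q).1 *
            F ^ (Multiplicative.toAdd p).2) * F ^ (Multiplicative.toAdd q).2 := by
            simp only [mul_assoc]
        _ = A ^ (Multiplicative.toAdd p).1 * (F ^ (Multiplicative.toAdd p).2 *
            A ^ (Multiplicative.toAdd q).1) * F ^ (Multiplicative.toAdd q).2 := by
            rw [hcommz]
        _ = A ^ (Multiplicative.toAdd p).1 * F ^ (Multiplicative.toAdd p).2 *
            (A ^ (Multiplicative.toAdd q).1 * F ^ (Multiplicative.toAdd q).2) := by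
            simp only [mul_assoc] }
  have hginj : Function.Injective g := by
    rw [injective_iff_map_eq_one]
    intro p hp
    have := hker (Multiplicative.toAdd p).1 (Multiplicative.toAdd p).2 hp
    have h1 : Multiplicative.toAdd p = (0, 0) := Prod.ext this.1 this.2
    have h2 : p = Multiplicative.ofAdd (0, 0) := by
      rw [← h1]; rfl
    exact h2.trans rfl
  exact ⟨g.range, ⟨(MonoidHom.ofInjective hginj).symm⟩⟩
end

section
/- The group Γ_4, i.e. the cyclically presented group with 4 generators x_0, …, x_3 and relators x_i x_{i+1} x_{i+1} for 0 ≤ i < 4 (the case m = 2, with subscripts modulo 4), is isomorphic to the cyclic group ℤ/15ℤ. -/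
namespace Stmt10Aux

local notation "G" => Gamma 2
local notation "X" => (PresentedGroup.of (rels := gammaRels 2) : ZMod 4 → G)

lemma rel_holds (i : ZMod 4) : X i * X (i + 1) * X (i + 1) = 1 := by
  have h : (FreeGroup.of i * FreeGroup.of (i+1) * FreeGroup.of (i + (2 : ZMod 4) - 1)
      : FreeGroup (ZMod 4)) ∈ Subgroup.normalClosure (gammaRels 2) :=
    Subgroup.subset_normalClosure ⟨i, by norm_num⟩
  have h1 : (QuotientGroup.mk (FreeGroup.of i * FreeGroup.of (i+1) *
      FreeGroup.of (i + (2:ZMod 4) - 1)) : G) = 1 := (QuotientGroup.eq_one_iff _).2 h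
  have h2 : i + (2 : ZMod 4) - 1 = i + 1 := by ring
  rw [h2] at h1
  exact h1

lemma step (i : ZMod 4) : X i = ((X (i+1)) ^ 2)⁻¹ := by
  refine eq_inv_of_mul_eq_one_left ?_
  rw [sq, ← mul_assoc]
  exact rel_holds i

lemma s0 : X 0 = ((X 1) ^ 2)⁻¹ := step 0
lemma s1 : X 1 = ((X 2) ^ 2)⁻¹ := step 1
lemma s2 : X 2 = ((X 3) ^ 2)⁻¹ := step 2
lemma s3 : X 3 = ((X 0) ^ 2)⁻¹ := by have := step 3; norm_num at this; exact this

lemma x15 : (X 3) ^ (15 : ℤ) = 1 := by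
  have key : X 3 = (X 3) ^ (16 : ℤ) := by
    nth_rewrite 1 [s3, s0, s1, s2]; group
  calc (X 3) ^ (15:ℤ) = (X 3) ^ (16:ℤ) * (X 3)⁻¹ := by group
    _ = (X 3) * (X 3)⁻¹ := by rw [← key]
    _ = 1 := mul_inv_cancel _

/-- exponents -/
def e (i : ZMod 4) : ZMod 15 := ((-2 : ℤ) ^ (3 - i.val) : ℤ)

def f (i : ZMod 4) : Multiplicative (ZMod 15) := Multiplicative.ofAdd (e i)

lemma rels_ok : ∀ r ∈ gammaRels 2, FreeGroup.lift f r = 1 := by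
  rintro r ⟨i, rfl⟩
  simp only [map_mul, FreeGroup.lift_apply_of]
  revert i; decide

def φ : G →* Multiplicative (ZMod 15) := PresentedGroup.toGroup rels_ok

def ψ : Multiplicative (ZMod 15) →* G :=
  AddMonoidHom.toMultiplicativeLeft
    (ZMod.lift 15 ⟨zmultiplesHom (Additive G) (Additive.ofMul (X 3)), by
      simp [zmultiplesHom_apply]
      rw [← ofMul_zpow]
      rw [x15]; rfl⟩)

lemma psi_apply (k : ℤ) : ψ (Multiplicative.ofAdd ((k : ZMod 15))) = (X 3) ^ k := by
  simp only [ψ, AddMonoidHom.toMultiplicativeLeft, MonoidHom.coe_mk, OneHom.coe_mk,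
    Equiv.coe_fn_mk, toAdd_ofAdd, ZMod.lift_coe, zmultiplesHom_apply, ← ofMul_zpow,
    toMul_ofMul]
  show Additive.toMul ((ZMod.lift 15 _) (Multiplicative.toAdd (Multiplicative.ofAdd (k : ZMod 15)))) = _
  simp only [toAdd_ofAdd, ZMod.lift_coe, zmultiplesHom_apply, ← ofMul_zpow, toMul_ofMul]

lemma phi_of (i : ZMod 4) : φ (X i) = f i := PresentedGroup.toGroup.of rels_ok

lemma left : ψ.comp φ = MonoidHom.id G := by
  apply PresentedGroup.ext
  intro i
  rw [MonoidHom.comp_apply, MonoidHom.id_apply, phi_of]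
  show ψ (Multiplicative.ofAdd (e i)) = X i
  rw [show e i = (((-2 : ℤ) ^ (3 - i.val) : ℤ) : ZMod 15) from rfl, psi_apply]
  fin_cases i
  · show (X 3) ^ ((-2:ℤ)^3) = X 0
    rw [s0, s1, s2]; group
  · show (X 3) ^ ((-2:ℤ)^2) = X 1
    rw [s1, s2]; group
  · show (X 3) ^ ((-2:ℤ)^1) = X 2
    rw [s2]; group
  · show (X 3) ^ ((-2:ℤ)^0) = X 3
    group

lemma right : φ.comp ψ = MonoidHom.id _ := by
  refine MonoidHom.ext fun x => ?_
  obtain ⟨k, rfl⟩ : ∃ k : ℤ, Multiplicative.ofAdd ((k : ZMod 15)) = x := by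
    obtain ⟨k, hk⟩ := ZMod.intCast_surjective (Multiplicative.toAdd x)
    exact ⟨k, by rw [hk]; rfl⟩
  rw [MonoidHom.comp_apply, MonoidHom.id_apply, psi_apply, map_zpow, phi_of]
  show (Multiplicative.ofAdd (e 3)) ^ k = _
  have he : e 3 = 1 := by decide
  rw [he, ← ofAdd_zsmul]
  norm_num

end Stmt10Aux

noncomputable def Stmt10Aux.iso : Gamma 2 ≃* Multiplicative (ZMod 15) :=
  MulEquiv.mk
    ⟨Stmt10Aux.φ, Stmt10Aux.ψ,
      fun x => DFunLike.congr_fun Stmt10Aux.left x,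
      fun x => DFunLike.congr_fun Stmt10Aux.right x⟩
    (map_mul Stmt10Aux.φ)

/-- The group `Γ_4` (the case `m = 2`) is isomorphic to the cyclic group `ℤ/15ℤ`. -/
theorem stmt10 : Nonempty (Gamma 2 ≃* Multiplicative (ZMod 15)) := by
  exact ⟨Stmt10Aux.iso⟩
end

section
/- The group Γ_6, i.e. the cyclically presented group with 6 generators x_0, …, x_5 and relators x_i x_{i+1} x_{i+2} for 0 ≤ i < 6 (the case m = 3, with subscripts modulo 6), is isomorphic to the free product ℤ * ℤ, i.e. to the free group of rank 2. -/
namespace Stmt11Aux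

/-- target assignment of generators -/
def g : ZMod (2 * 3) → FreeGroup (Fin 2) := fun i =>
  match i with
  | 0 => FreeGroup.of 0
  | 1 => FreeGroup.of 1
  | 2 => (FreeGroup.of 1)⁻¹ * (FreeGroup.of 0)⁻¹
  | 3 => FreeGroup.of 0
  | 4 => FreeGroup.of 1
  | 5 => (FreeGroup.of 1)⁻¹ * (FreeGroup.of 0)⁻¹

lemma rels_hold : ∀ r ∈ gammaRels 3, FreeGroup.lift g r = 1 := by
  rintro r ⟨i, rfl⟩
  fin_cases i <;> simp only [map_mul, FreeGroup.lift_apply_of] <;> simp (config := {decide := true}) [g] <;> group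

lemma rel_gamma (i : ZMod (2 * 3)) :
    PresentedGroup.of (rels := gammaRels 3) i * PresentedGroup.of (i + 1) *
      PresentedGroup.of (i + (3 : ZMod (2 * 3)) - 1) = 1 := by
  have : (QuotientGroup.mk (FreeGroup.of i * FreeGroup.of (i + 1) *
      FreeGroup.of (i + (3 : ZMod (2 * 3)) - 1)) :
      PresentedGroup (gammaRels 3)) = 1 := by
    rw [QuotientGroup.eq_one_iff]
    exact Subgroup.subset_normalClosure ⟨i, rfl⟩
  exact this

/-- homomorphism Gamma 3 → F2 -/
def φ : Gamma 3 →* FreeGroup (Fin 2) := PresentedGroup.toGroup rels_hold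

/-- homomorphism F2 → Gamma 3 -/
def ψ : FreeGroup (Fin 2) →* Gamma 3 :=
  FreeGroup.lift (fun j => PresentedGroup.of (rels := gammaRels 3) (if j = 0 then 0 else 1))

lemma of2 : PresentedGroup.of (rels := gammaRels 3) 2 =
    (PresentedGroup.of (rels := gammaRels 3) 1)⁻¹ * (PresentedGroup.of 0)⁻¹ := by
  have h := rel_gamma 0
  norm_num at h
  have h' := eq_inv_of_mul_eq_one_right h
  rw [h', mul_inv_rev]

lemma of3 : PresentedGroup.of (rels := gammaRels 3) 3 =
    PresentedGroup.of (rels := gammaRels 3) 0 := by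
  have h := rel_gamma 1
  norm_num at h
  have h2 := of2
  rw [h2] at h
  have : PresentedGroup.of (rels := gammaRels 3) 3 =
      ((PresentedGroup.of (rels := gammaRels 3) 1 *
        ((PresentedGroup.of (rels := gammaRels 3) 1)⁻¹ * (PresentedGroup.of 0)⁻¹)))⁻¹ := by
    rw [← mul_left_cancel_iff
      (a := PresentedGroup.of (rels := gammaRels 3) 1 *
        ((PresentedGroup.of (rels := gammaRels 3) 1)⁻¹ * (PresentedGroup.of 0)⁻¹))]
    simpa using h
  rw [this]; group

lemma of4 : PresentedGroup.of (rels := gammaRels 3) 4 =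
    PresentedGroup.of (rels := gammaRels 3) 1 := by
  have h := rel_gamma 2
  norm_num at h
  rw [of2, of3] at h
  have : ((PresentedGroup.of (rels := gammaRels 3) 1)⁻¹ * (PresentedGroup.of 0)⁻¹ *
      PresentedGroup.of 0) * PresentedGroup.of (rels := gammaRels 3) 4 = 1 := h
  calc PresentedGroup.of (rels := gammaRels 3) 4
      = (((PresentedGroup.of (rels := gammaRels 3) 1)⁻¹ * (PresentedGroup.of 0)⁻¹ *
        PresentedGroup.of 0))⁻¹ * (((PresentedGroup.of (rels := gammaRels 3) 1)⁻¹ *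
        (PresentedGroup.of 0)⁻¹ * PresentedGroup.of 0) *
        PresentedGroup.of (rels := gammaRels 3) 4) := by group
    _ = _ := by rw [this]; group

lemma of5 : PresentedGroup.of (rels := gammaRels 3) 5 =
    (PresentedGroup.of (rels := gammaRels 3) 1)⁻¹ * (PresentedGroup.of 0)⁻¹ := by
  have h := rel_gamma 3
  norm_num at h
  rw [of3, of4] at h
  calc PresentedGroup.of (rels := gammaRels 3) 5
      = (PresentedGroup.of (rels := gammaRels 3) 0 *
        PresentedGroup.of (rels := gammaRels 3) 1)⁻¹ *
        (PresentedGroup.of (rels := gammaRels 3) 0 *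
        PresentedGroup.of (rels := gammaRels 3) 1 *
        PresentedGroup.of (rels := gammaRels 3) 5) := by group
    _ = _ := by rw [h]; group

lemma psi_phi : ψ.comp φ = MonoidHom.id _ := by
  apply PresentedGroup.ext
  intro i
  fin_cases i <;>
    simp [φ, ψ, PresentedGroup.toGroup.of, g] <;>
    first
      | rfl
      | exact of2.symm
      | exact of3.symm
      | exact of4.symm
      | exact of5.symm

lemma phi_psi : φ.comp ψ = MonoidHom.id _ := by
  apply FreeGroup.ext_hom
  intro j
  fin_cases j <;> simp [φ, ψ, PresentedGroup.toGroup.of, g]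

end Stmt11Aux

/-- The group `Γ_6` (the case `m = 3`) is isomorphic to the free product `ℤ * ℤ`,
i.e. the free group of rank 2. -/
theorem stmt11 : Nonempty (Gamma 3 ≃* FreeGroup (Fin 2)) := by
  exact ⟨MonoidHom.toMulEquiv Stmt11Aux.φ Stmt11Aux.ψ Stmt11Aux.psi_phi Stmt11Aux.phi_psi⟩
end

section
/- The group Γ_12, i.e. the cyclically presented group with 12 generators x_0, …, x_11 and relators x_i x_{i+1} x_{i+5} for 0 ≤ i < 12 (the case m = 6, with subscripts modulo 12), is isomorphic to the free product ℤ/5ℤ * ℤ * ℤ of the cyclic group of order 5 and two infinite cyclic groups. -/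
/-!
Write `ℤ/5 * ℤ * ℤ` as `⟨a⟩ * ⟨b⟩ * ⟨c⟩` and send `x_i ↦ u_{i mod 3} a^{e_i} u_{i+1 mod 3}⁻¹`
with `u = (bc, c, 1)`. As `i, i+1, i+5` run through the three residues mod 3, the image of the
relator `x_i x_{i+1} x_{i+5}` telescopes to a conjugate of `a^{e_i + e_{i+1} + e_{i+5}}`, and the
exponents `e_i` are a solution of `e_i + e_{i+1} + e_{i+5} ≡ 0 (mod 5)`.

Conversely, solving the relators one at a time expresses every generator through `x₉, x₁₀, x₁₁`;
one more relator then gives `(x₁₁x₉x₁₀)⁵ = 1`, so `a ↦ x₁₁x₉x₁₀, b ↦ x₉, c ↦ x₁₀` is a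
homomorphism. Both composites fix generators.
-/

open Monoid Multiplicative

theorem Subgroup.mem_of_mul_mul_eq_one_left {G : Type*} [Group G] {H : Subgroup G} {x y z : G}
    (h : x * y * z = 1) (hy : y ∈ H) (hz : z ∈ H) : x ∈ H := by
  rw [eq_inv_of_mul_eq_one_left (by rwa [← mul_assoc] : x * (y * z) = 1)]
  exact H.inv_mem (H.mul_mem hy hz)

theorem Subgroup.mem_of_mul_mul_eq_one_right {G : Type*} [Group G] {H : Subgroup G} {x y z : G}
    (h : x * y * z = 1) (hx : x ∈ H) (hy : y ∈ H) : z ∈ H := by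
  rw [eq_inv_of_mul_eq_one_right h]
  exact H.inv_mem (H.mul_mem hx hy)

theorem MonoidHom.ext_mzmod {n : ℕ} {G : Type*} [Group G] {f g : Multiplicative (ZMod n) →* G}
    (h : f (ofAdd 1) = g (ofAdd 1)) : f = g := by
  refine MonoidHom.ext fun y => ?_
  obtain ⟨k, hk⟩ := ZMod.intCast_surjective (toAdd y)
  have hy : y = ofAdd 1 ^ k := by rw [← ofAdd_zsmul, zsmul_one, hk, ofAdd_toAdd]
  rw [hy, map_zpow, map_zpow, h]

section ZModPowers

variable {n : ℕ} {G : Type*} [Group G]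

def zmodPowersHom (g : G) (hg : g ^ n = 1) : Multiplicative (ZMod n) →* G :=
  AddMonoidHom.toMultiplicativeLeft <| ZMod.lift n
    ⟨zmultiplesHom _ (Additive.ofMul g), by simp [natCast_zsmul, ← ofMul_pow, hg]⟩

theorem zmodPowersHom_ofAdd_intCast (g : G) (hg : g ^ n = 1) (k : ℤ) :
    zmodPowersHom g hg (ofAdd (k : ZMod n)) = g ^ k := by
  show Additive.toMul (ZMod.lift n _ (k : ZMod n)) = g ^ k
  rw [ZMod.lift_coe]
  exact toMul_zsmul _ _

@[simp]
theorem zmodPowersHom_ofAdd_one (g : G) (hg : g ^ n = 1) :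
    zmodPowersHom g hg (ofAdd 1) = g := by
  simpa using zmodPowersHom_ofAdd_intCast g hg 1

end ZModPowers

namespace Gamma

def lift {m : ℕ} {G : Type*} [Group G] (f : ZMod (2 * m) → G)
    (hf : ∀ i, f i * f (i + 1) * f (i + m - 1) = 1) : Gamma m →* G :=
  PresentedGroup.toGroup (by rintro _ ⟨i, rfl⟩; simpa using hf i)

theorem of_mul_of_mul_of (m : ℕ) (i : ZMod (2 * m)) :
    (.of i * .of (i + 1) * .of (i + m - 1) : Gamma m) = 1 :=
  (QuotientGroup.eq_one_iff _).mpr (Subgroup.subset_normalClosure ⟨i, rfl⟩)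

end Gamma

namespace Gamma12

abbrev x (i : ZMod 12) : Gamma 6 := .of i

theorem x_mul_x_mul_x (i j k : ZMod 12) (hj : i + 1 = j := by decide)
    (hk : i + 5 = k := by decide) : x i * x j * x k = 1 := by
  subst hj hk
  have h := Gamma.of_mul_of_mul_of 6 i
  rwa [add_sub_assoc, show ((6 : ℕ) : ZMod (2 * 6)) - 1 = 5 from rfl] at h

open Subgroup in
theorem closure_x_nine_ten_eleven : closure {x 9, x 10, x 11} = ⊤ := by
  set H := closure {x 9, x 10, x 11}
  have h9 : x 9 ∈ H := subset_closure (by simp)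
  have h10 : x 10 ∈ H := subset_closure (by simp)
  have h11 : x 11 ∈ H := subset_closure (by simp)
  have h2 := mem_of_mul_mul_eq_one_right (x_mul_x_mul_x 9 10 2) h9 h10
  have h3 := mem_of_mul_mul_eq_one_right (x_mul_x_mul_x 10 11 3) h10 h11
  have h7 := mem_of_mul_mul_eq_one_right (x_mul_x_mul_x 2 3 7) h2 h3
  have h6 := mem_of_mul_mul_eq_one_left (x_mul_x_mul_x 6 7 11) h7 h11
  have h1 := mem_of_mul_mul_eq_one_left (x_mul_x_mul_x 1 2 6) h2 h6
  have h5 := mem_of_mul_mul_eq_one_left (x_mul_x_mul_x 5 6 10) h6 h10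
  have h0 := mem_of_mul_mul_eq_one_left (x_mul_x_mul_x 0 1 5) h1 h5
  have h4 := mem_of_mul_mul_eq_one_left (x_mul_x_mul_x 4 5 9) h5 h9
  have h8 := mem_of_mul_mul_eq_one_right (x_mul_x_mul_x 3 4 8) h3 h4
  rw [eq_top_iff, ← PresentedGroup.closure_range_of, closure_le]
  rintro _ ⟨i, rfl⟩
  fin_cases i <;> assumption

theorem pow_five_eq_one : (x 11 * x 9 * x 10) ^ 5 = 1 := by
  have e2 := eq_inv_of_mul_eq_one_right (x_mul_x_mul_x 9 10 2)
  have e3 := eq_inv_of_mul_eq_one_right (x_mul_x_mul_x 10 11 3)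
  have e7 := eq_inv_of_mul_eq_one_right (x_mul_x_mul_x 2 3 7)
  have e6 := eq_inv_of_mul_eq_one_left ((mul_assoc _ _ _).symm.trans (x_mul_x_mul_x 6 7 11))
  have e1 := eq_inv_of_mul_eq_one_left ((mul_assoc _ _ _).symm.trans (x_mul_x_mul_x 1 2 6))
  have e5 := eq_inv_of_mul_eq_one_left ((mul_assoc _ _ _).symm.trans (x_mul_x_mul_x 5 6 10))
  have e4 := eq_inv_of_mul_eq_one_left ((mul_assoc _ _ _).symm.trans (x_mul_x_mul_x 4 5 9))
  have e8 := eq_inv_of_mul_eq_one_right (x_mul_x_mul_x 3 4 8)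
  calc (x 11 * x 9 * x 10) ^ 5 = x 8 * x 9 * x 1 := by
        rw [e8, e1, e4, e5, e6, e7, e3, e2]
        simp only [pow_succ, pow_zero, one_mul]
        group
    _ = 1 := x_mul_x_mul_x 8 9 1

section Twist

def mod3 : ZMod 12 →+* ZMod 3 := ZMod.castHom (by norm_num) _

variable {G : Type*} [Group G] (u : ZMod 3 → G) (w : ZMod 12 → G)

def twist (i : ZMod 12) : G := u (mod3 i) * w i * (u (mod3 i + 1))⁻¹

theorem twist_mul_twist_mul_twist (i : ZMod 12) :
    twist u w i * twist u w (i + 1) * twist u w (i + 5) =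
      u (mod3 i) * (w i * w (i + 1) * w (i + 5)) * (u (mod3 i))⁻¹ := by
  have h5 : mod3 (i + 5) = mod3 i + 1 + 1 := by rw [map_add, add_assoc]; congr 1
  have h3 : mod3 i + 1 + 1 + 1 = mod3 i := by rw [add_assoc, add_assoc]; exact add_zero _
  simp only [twist, map_add, map_one, h5, h3]
  group

end Twist

abbrev T := Coprod (Multiplicative (ZMod 5)) (Coprod (Multiplicative ℤ) (Multiplicative ℤ))

/- The `MulOneClass` instances inside `T` are `Multiplicative.mulOneClass`, not the ones coming
from `Multiplicative.group`, so without this shortcut the group lemmas (`mul_inv_rev`, `map_inv`,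
the `group` tactic) do not match products and inverses in `T`. -/
instance : Group T := Coprod.instGroup

def a : T := Coprod.inl (ofAdd 1)
def b : T := Coprod.inr (Coprod.inl (ofAdd 1))
def c : T := Coprod.inr (Coprod.inr (ofAdd 1))

def e : ZMod 12 → ZMod 5 := ![1, 2, 0, 4, 3, 2, 3, 1, 3, 0, 0, 1]

theorem e_add_e_add_e (i : ZMod 12) : e i + e (i + 1) + e (i + 5) = 0 := by
  revert i; decide

def u : ZMod 3 → T := ![b * c, c, 1]

def t : ZMod 12 → T := twist u fun i => Coprod.inl (ofAdd (e i))

theorem t_mul_t_mul_t (i : ZMod 12) : t i * t (i + 1) * t (i + 5) = 1 := by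
  rw [t, twist_mul_twist_mul_twist, ← map_mul, ← map_mul, ← ofAdd_add, ← ofAdd_add,
    e_add_e_add_e, ofAdd_zero, map_one, mul_one, mul_inv_cancel]

def φ : Gamma 6 →* T := Gamma.lift (m := 6) t fun i => by
  rw [add_sub_assoc, show ((6 : ℕ) : ZMod (2 * 6)) - 1 = 5 from rfl]
  exact t_mul_t_mul_t i

@[simp] theorem φ_x_nine : φ (x 9) = b := by
  change u 0 * Coprod.inl (ofAdd 0) * (u 1)⁻¹ = b
  rw [ofAdd_zero, map_one, mul_one]
  exact mul_inv_cancel_right b c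

@[simp] theorem φ_x_ten : φ (x 10) = c := by
  change u 1 * Coprod.inl (ofAdd 0) * (u 2)⁻¹ = c
  rw [ofAdd_zero, map_one, mul_one]
  exact mul_inv_cancel_right c 1

@[simp] theorem φ_x_eleven : φ (x 11) = a * c⁻¹ * b⁻¹ := by
  change 1 * a * (b * c)⁻¹ = a * c⁻¹ * b⁻¹
  rw [one_mul, mul_inv_rev, mul_assoc]

def ψ : T →* Gamma 6 :=
  Coprod.lift (zmodPowersHom _ pow_five_eq_one)
    (Coprod.lift (zpowersHom _ (x 9)) (zpowersHom _ (x 10)))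

@[simp] theorem ψ_a : ψ a = x 11 * x 9 * x 10 := by simp [ψ, a]
@[simp] theorem ψ_b : ψ b = x 9 := by simp [ψ, b]
@[simp] theorem ψ_c : ψ c = x 10 := by simp [ψ, c]

theorem ψ_comp_φ : ψ.comp φ = .id _ := by
  refine MonoidHom.eq_of_eqOn_dense closure_x_nine_ten_eleven ?_
  rintro _ (rfl | rfl | rfl) <;> simp

theorem φ_comp_ψ : φ.comp ψ = .id _ := by
  refine Coprod.hom_ext (MonoidHom.ext_mzmod ?_)
    (Coprod.hom_ext (MonoidHom.ext_mint ?_) (MonoidHom.ext_mint ?_))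
  · change φ (ψ a) = a
    simp
  · change φ (ψ b) = b
    simp
  · change φ (ψ c) = c
    simp

end Gamma12

/-- The group `Γ_12` (the case `m = 6`) is isomorphic to the free product
`ℤ/5ℤ * ℤ * ℤ` of the cyclic group of order 5 and two infinite cyclic groups. -/
theorem stmt12 :
    Nonempty (Gamma 6 ≃*
      Monoid.Coprod (Multiplicative (ZMod 5))
        (Monoid.Coprod (Multiplicative ℤ) (Multiplicative ℤ))) :=
  ⟨MonoidHom.toMulEquiv Gamma12.φ Gamma12.ψ Gamma12.ψ_comp_φ Gamma12.φ_comp_ψ⟩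
end

section
/- Let n ≥ 1 and let k, l be integers with 0 ≤ k, l < n, k ≠ l and gcd(n, k, l) = 1. Suppose conditions (B) and (C) fail and condition (D) holds, i.e.: n divides none of k+l, 2l−k, 2k−l; n divides none of 3l, 3k, 3(l−k); and n divides at least one of 2(k+l), 2(2l−k), 2(2k−l). Then n is even and the cyclically presented group G_n(x_0 x_k x_l) is isomorphic to G_n(x_0 x_1 x_{n/2 − 1}), i.e. to the group Γ_n with n generators x_0, …, x_{n-1} and relators x_i x_{i+1} x_{i+n/2−1} (subscripts modulo n). -/
/-- Relators of the cyclically presented group `G_n(x_0 x_k x_l)`: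
`x_i x_{i+k} x_{i+l}` for `0 ≤ i < n`, subscripts mod `n`. -/
def gRels (n : ℕ) (k l : ZMod n) : Set (FreeGroup (ZMod n)) :=
  {r | ∃ i : ZMod n, r = FreeGroup.of i * FreeGroup.of (i + k) * FreeGroup.of (i + l)}

/-- The cyclically presented group `G_n(x_0 x_k x_l)`. -/
abbrev G (n : ℕ) (k l : ZMod n) := PresentedGroup (gRels n k l)

namespace Stmt15

open Subgroup FreeGroup

variable {n : ℕ}

/-- generic: an automorphism of the free group carrying one relator closure to another. -/
noncomputable def isoOfMap (e : FreeGroup (ZMod n) ≃* FreeGroup (ZMod n))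
    {k l k' l' : ZMod n}
    (h : Subgroup.normalClosure ((e : FreeGroup (ZMod n) →* FreeGroup (ZMod n)) '' gRels n k l)
       = Subgroup.normalClosure (gRels n k' l')) :
    G n k l ≃* G n k' l' :=
  QuotientGroup.congr _ _ e
    (by rw [Subgroup.map_normalClosure _ _ e.surjective, h])

lemma mem_closure_conj {s : Set (FreeGroup (ZMod n))} {r g : FreeGroup (ZMod n)}
    (hr : r ∈ s) : g * r * g⁻¹ ∈ Subgroup.normalClosure s :=
  Subgroup.normalClosure_normal.conj_mem _ (Subgroup.subset_normalClosure hr) g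

lemma closure_cyc (k l : ZMod n) :
    Subgroup.normalClosure (gRels n k l) = Subgroup.normalClosure (gRels n (l - k) (-k)) := by
  apply le_antisymm <;> apply Subgroup.normalClosure_le_normal
  · rintro r ⟨i, rfl⟩
    have h : FreeGroup.of (i+k) * FreeGroup.of ((i+k) + (l-k)) * FreeGroup.of ((i+k) + (-k))
        ∈ gRels n (l-k) (-k) := ⟨i+k, rfl⟩
    have hmem := mem_closure_conj (g := FreeGroup.of i) h
    have e : FreeGroup.of i * FreeGroup.of (i + k) * FreeGroup.of (i + l)
        = FreeGroup.of i * (FreeGroup.of (i+k) * FreeGroup.of ((i+k)+(l-k)) *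
            FreeGroup.of ((i+k)+(-k))) * (FreeGroup.of i)⁻¹ := by
      have h1 : (i+k)+(l-k) = i + l := by ring
      have h2 : (i+k)+(-k) = i := by ring
      rw [h1, h2]; group
    rw [e]; exact hmem
  · rintro r ⟨j, rfl⟩
    have h : FreeGroup.of (j-k) * FreeGroup.of ((j-k) + k) * FreeGroup.of ((j-k) + l)
        ∈ gRels n k l := ⟨j-k, rfl⟩
    have hmem := mem_closure_conj (g := (FreeGroup.of (j-k))⁻¹) h
    have e : FreeGroup.of j * FreeGroup.of (j + (l-k)) * FreeGroup.of (j + (-k))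
        = (FreeGroup.of (j-k))⁻¹ * (FreeGroup.of (j-k) * FreeGroup.of ((j-k)+k) *
            FreeGroup.of ((j-k)+l)) * ((FreeGroup.of (j-k))⁻¹)⁻¹ := by
      have h1 : (j-k)+k = j := by ring
      have h2 : (j-k)+l = j + (l-k) := by ring
      have h3 : j + (-k) = j - k := by ring
      rw [h1, h2, h3]; group
    rw [e]; exact hmem

noncomputable def isoCyc (k l : ZMod n) : G n k l ≃* G n (l - k) (-k) :=
  QuotientGroup.quotientMulEquivOfEq (closure_cyc k l)

/-- multiplication by a unit as a permutation of `ZMod n` -/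
def scalePerm (u : (ZMod n)ˣ) : ZMod n ≃ ZMod n where
  toFun x := (u : ZMod n) * x
  invFun x := ((u⁻¹ : (ZMod n)ˣ) : ZMod n) * x
  left_inv x := by simp [← mul_assoc]
  right_inv x := by simp [← mul_assoc]

lemma image_scale (u : (ZMod n)ˣ) (k l : ZMod n) :
    ((freeGroupCongr (scalePerm u) : FreeGroup (ZMod n) →* FreeGroup (ZMod n)) '' gRels n k l)
      = gRels n ((u : ZMod n) * k) ((u : ZMod n) * l) := by
  ext r
  constructor
  · rintro ⟨_, ⟨i, rfl⟩, rfl⟩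
    refine ⟨(u : ZMod n) * i, ?_⟩
    simp [scalePerm, mul_add]
  · rintro ⟨j, rfl⟩
    refine ⟨FreeGroup.of (((u⁻¹ : (ZMod n)ˣ) : ZMod n) * j) *
      FreeGroup.of (((u⁻¹ : (ZMod n)ˣ) : ZMod n) * j + k) *
      FreeGroup.of (((u⁻¹ : (ZMod n)ˣ) : ZMod n) * j + l), ⟨_, rfl⟩, ?_⟩
    simp [scalePerm, mul_add, ← mul_assoc]

noncomputable def isoScale (u : (ZMod n)ˣ) (k l : ZMod n) :
    G n k l ≃* G n ((u : ZMod n) * k) ((u : ZMod n) * l) :=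
  isoOfMap (freeGroupCongr (scalePerm u)) (by rw [image_scale])

/-- the automorphism of the free group inverting every generator -/
noncomputable def invAut : FreeGroup (ZMod n) ≃* FreeGroup (ZMod n) :=
  MonoidHom.toMulEquiv (FreeGroup.lift fun i => (FreeGroup.of i)⁻¹)
    (FreeGroup.lift fun i => (FreeGroup.of i)⁻¹)
    (FreeGroup.ext_hom _ _ (by simp)) (FreeGroup.ext_hom _ _ (by simp))

lemma closure_swap (k l : ZMod n) :
    Subgroup.normalClosure (((invAut : FreeGroup (ZMod n) ≃* _) :
        FreeGroup (ZMod n) →* FreeGroup (ZMod n)) '' gRels n k l)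
      = Subgroup.normalClosure (gRels n l k) := by
  apply le_antisymm <;> apply Subgroup.normalClosure_le_normal
  · rintro r ⟨_, ⟨i, rfl⟩, rfl⟩
    have h : FreeGroup.of i * FreeGroup.of (i + l) * FreeGroup.of (i + k) ∈ gRels n l k :=
      ⟨i, rfl⟩
    have hinv : (FreeGroup.of i * FreeGroup.of (i + l) * FreeGroup.of (i + k))⁻¹ ∈
        Subgroup.normalClosure (gRels n l k) :=
      inv_mem (Subgroup.subset_normalClosure h)
    have hmem := Subgroup.normalClosure_normal.conj_mem _ hinv (FreeGroup.of i)⁻¹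
    have e : ((invAut : FreeGroup (ZMod n) ≃* _) :
        FreeGroup (ZMod n) →* FreeGroup (ZMod n))
          (FreeGroup.of i * FreeGroup.of (i + k) * FreeGroup.of (i + l))
        = (FreeGroup.of i)⁻¹ *
            (FreeGroup.of i * FreeGroup.of (i + l) * FreeGroup.of (i + k))⁻¹ *
            ((FreeGroup.of i)⁻¹)⁻¹ := by
      simp [invAut]; group
    rw [e]; exact hmem
  · rintro r ⟨j, rfl⟩
    have h : (FreeGroup.of j * FreeGroup.of (j + k) * FreeGroup.of (j + l)) ∈ gRels n k l :=
      ⟨j, rfl⟩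
    have h2 : ((invAut : FreeGroup (ZMod n) ≃* _) :
        FreeGroup (ZMod n) →* FreeGroup (ZMod n))
          (FreeGroup.of j * FreeGroup.of (j + k) * FreeGroup.of (j + l)) ∈
        ((invAut : FreeGroup (ZMod n) ≃* _) :
          FreeGroup (ZMod n) →* FreeGroup (ZMod n)) '' gRels n k l :=
      Set.mem_image_of_mem _ h
    have hinv := inv_mem (Subgroup.subset_normalClosure h2)
    have hmem := Subgroup.normalClosure_normal.conj_mem _ hinv (FreeGroup.of j)
    have e : FreeGroup.of j * FreeGroup.of (j + l) * FreeGroup.of (j + k)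
        = FreeGroup.of j * (((invAut : FreeGroup (ZMod n) ≃* _) :
            FreeGroup (ZMod n) →* FreeGroup (ZMod n))
            (FreeGroup.of j * FreeGroup.of (j + k) * FreeGroup.of (j + l)))⁻¹ *
            (FreeGroup.of j)⁻¹ := by
      simp [invAut]; group
    rw [e]; exact hmem

noncomputable def isoSwap (k l : ZMod n) : G n k l ≃* G n l k :=
  isoOfMap invAut (closure_swap k l)

/- ### Arithmetic part -/

lemma gcd_aux {n : ℕ} {k l a b : ℤ} (hg : Int.gcd (n:ℤ) (Int.gcd k l) = 1)
    (h1 : ((Int.gcd (n:ℤ) (Int.gcd a b) : ℕ) : ℤ) ∣ k)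
    (h2 : ((Int.gcd (n:ℤ) (Int.gcd a b) : ℕ) : ℤ) ∣ l) :
    Int.gcd (n:ℤ) (Int.gcd a b) = 1 := by
  have hn : ((Int.gcd (n:ℤ) (Int.gcd a b) : ℕ) : ℤ) ∣ (n:ℤ) := Int.gcd_dvd_left _ _
  have hd : ((Int.gcd (n:ℤ) (Int.gcd a b) : ℕ) : ℤ) ∣
      ((Int.gcd (n:ℤ) ((Int.gcd k l : ℕ) : ℤ) : ℕ) : ℤ) :=
    Int.dvd_coe_gcd hn (Int.dvd_coe_gcd h1 h2)
  rw [hg] at hd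
  exact Nat.dvd_one.mp (by exact_mod_cast hd)

lemma gcd_M {n : ℕ} {M c x y : ℤ} (hn2 : (n:ℤ) = 2*M) (hxy : x + y = M*c)
    (hg : Int.gcd (n:ℤ) (Int.gcd x y) = 1) : Int.gcd x M = 1 := by
  have d1 : ((Int.gcd x M : ℕ) : ℤ) ∣ x := Int.gcd_dvd_left _ _
  have d2 : ((Int.gcd x M : ℕ) : ℤ) ∣ M := Int.gcd_dvd_right _ _
  have dn : ((Int.gcd x M : ℕ) : ℤ) ∣ (n:ℤ) := hn2 ▸ d2.mul_left 2
  have dy : ((Int.gcd x M : ℕ) : ℤ) ∣ y := by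
    have h : y = M * c - x := by linarith
    rw [h]; exact dvd_sub (d2.mul_right c) d1
  have hd : ((Int.gcd x M : ℕ) : ℤ) ∣
      ((Int.gcd (n:ℤ) ((Int.gcd x y : ℕ) : ℤ) : ℕ) : ℤ) :=
    Int.dvd_coe_gcd dn (Int.dvd_coe_gcd d1 dy)
  rw [hg] at hd
  exact Nat.dvd_one.mp (by exact_mod_cast hd)

/-- If `x` is odd and coprime to `M` where `n = 2M`, produce Bezout `v*x + w*n = 1`. -/
lemma bezout_of_odd {n : ℕ} {M x : ℤ} (hn2 : (n:ℤ) = 2*M) (hx : Odd x)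
    (hgx : Int.gcd x M = 1) : ∃ v w : ℤ, v * x + w * (n:ℤ) = 1 := by
  have c2 : IsCoprime x 2 := by
    rw [Int.isCoprime_iff_gcd_eq_one]
    rw [Int.gcd]
    have hodd : Odd x.natAbs := Int.natAbs_odd.mpr hx
    simpa [Int.natAbs_natCast] using Nat.coprime_two_right.mpr hodd
  have cM : IsCoprime x M := Int.isCoprime_iff_gcd_eq_one.mpr hgx
  have hco : IsCoprime x (n:ℤ) := by rw [hn2]; exact c2.mul_right cM
  obtain ⟨v, w, hvw⟩ := hco
  exact ⟨v, w, by linarith⟩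

lemma main_red (n : ℕ) (hn : 1 ≤ n) (a b : ℤ)
    (hg : Int.gcd (n:ℤ) (Int.gcd a b) = 1)
    (hab : ¬ (n:ℤ) ∣ (a+b)) (h2 : (n:ℤ) ∣ 2*(a+b)) :
    Even n ∧ Nonempty (G n (a : ZMod n) (b : ZMod n) ≃*
      G n (1 : ZMod n) ((n / 2 - 1 : ℕ) : ZMod n)) := by
  -- n is even
  have heven : Even n := by
    by_contra ho
    have hodd : Odd n := Nat.odd_iff.mpr (Nat.not_even_iff.mp ho)
    have hcop : IsCoprime (n:ℤ) 2 := by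
      rw [Int.isCoprime_iff_gcd_eq_one]
      have h1 : Nat.gcd n 2 = 1 := Nat.Coprime.gcd_eq_one (Nat.coprime_two_right.mpr hodd)
      simpa [Int.gcd] using h1
    exact hab (hcop.dvd_of_dvd_mul_left h2)
  refine ⟨heven, ?_⟩
  obtain ⟨m, hm⟩ := heven
  have hm1 : 1 ≤ m := by omega
  set M : ℤ := (m : ℤ) with hM
  have hn2 : (n:ℤ) = 2*M := by rw [hM]; push_cast [hm]; ring
  -- a + b = M * c with c odd
  obtain ⟨c, hc⟩ := h2
  have habc : a + b = M * c := by
    have h : 2*(a+b) = 2*(M*c) := by rw [hc, hn2]; ring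
    exact mul_left_cancel₀ two_ne_zero h
  have hcodd : Odd c := by
    rcases Int.even_or_odd c with ⟨t, ht⟩ | h
    · exact absurd ⟨t, by rw [habc, ht, hn2]; ring⟩ hab
    · exact h
  have hgaM : Int.gcd a M = 1 := gcd_M hn2 habc hg
  have hgbM : Int.gcd b M = 1 := gcd_M hn2 (by linarith : b + a = M*c)
    (by rwa [Int.gcd_comm a b] at hg)
  -- target cast lemma
  have htar : ((n / 2 - 1 : ℕ) : ZMod n) = ((M - 1 : ℤ) : ZMod n) := by
    have h1 : n / 2 - 1 = m - 1 := by omega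
    have h2 : ((m - 1 : ℕ) : ℤ) = M - 1 := by rw [hM]; push_cast [hm1]; ring
    rw [h1, ← h2]; push_cast; ring
  -- key congruence
  have keycong : ∀ x y v w : ℤ, x + y = M * c → Odd x → v * x + w * (n:ℤ) = 1 →
      ((v * y : ℤ) : ZMod n) = ((M - 1 : ℤ) : ZMod n) := by
    intro x y v w hxy hx hvw
    have hvodd : Odd v := by
      rcases Int.even_or_odd v with hv | hv
      · exfalso
        have he : Even (1:ℤ) := by
          rw [← hvw]
          exact (hv.mul_right x).add ((by exact_mod_cast hm ▸ (Even.add_self m) :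
            Even ((n:ℤ))).mul_left w)
        simp [Int.even_iff] at he
      · exact hv
    obtain ⟨t, ht⟩ := hcodd.mul hvodd
    have hdvd : (n:ℤ) ∣ (M - 1) - v * y := by
      refine ⟨-(t + w), ?_⟩
      have hy : y = M * c - x := by linarith
      rw [hy, hn2]
      have hcv : c * v = 2*t + 1 := ht
      linear_combination (-M)*hcv + hvw + (-w)*hn2
    rw [ZMod.intCast_eq_intCast_iff]
    exact (Int.modEq_iff_dvd.mpr hdvd).symm.symm
  -- case split on parity of a
  rcases Int.even_or_odd a with haeven | haodd
  · -- a even, so M odd and b odd: b is the unit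
    have hModd : Odd M := by
      rcases Int.even_or_odd M with hMe | hMo
      · exfalso
        have h2d : (2:ℤ) ∣ ((Int.gcd a M : ℕ) : ℤ) :=
          Int.dvd_coe_gcd (haeven.two_dvd) (hMe.two_dvd)
        rw [hgaM] at h2d
        norm_num at h2d
      · exact hMo
    have hbodd : Odd b := by
      have hb : b = M * c - a := by linarith
      rw [hb]
      exact (hModd.mul hcodd).sub_even haeven
    obtain ⟨v, w, hvw⟩ := bezout_of_odd hn2 hbodd hgbM
    have hvb : ((v:ℤ) : ZMod n) * ((b:ℤ) : ZMod n) = 1 := by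
      have hcast := congrArg (fun z : ℤ => (z : ZMod n)) hvw
      push_cast at hcast
      simpa [ZMod.natCast_self] using hcast
    let U : (ZMod n)ˣ := ⟨((v:ℤ) : ZMod n), ((b:ℤ) : ZMod n), hvb, by rw [mul_comm]; exact hvb⟩
    have iso := isoScale U ((a:ℤ) : ZMod n) ((b:ℤ) : ZMod n)
    have e2 : (U : ZMod n) * ((b:ℤ) : ZMod n) = 1 := hvb
    have e1 : (U : ZMod n) * ((a:ℤ) : ZMod n) = ((n / 2 - 1 : ℕ) : ZMod n) := by
      have hk := keycong b a v w (by linarith) hbodd hvw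
      rw [htar, ← hk]
      show ((v:ℤ) : ZMod n) * ((a:ℤ) : ZMod n) = _
      push_cast
      ring
    rw [e1, e2] at iso
    exact ⟨iso.trans (isoSwap _ _)⟩
  · -- a odd: a is the unit
    obtain ⟨v, w, hvw⟩ := bezout_of_odd hn2 haodd hgaM
    have hva : ((v:ℤ) : ZMod n) * ((a:ℤ) : ZMod n) = 1 := by
      have hcast := congrArg (fun z : ℤ => (z : ZMod n)) hvw
      push_cast at hcast
      simpa [ZMod.natCast_self] using hcast
    let U : (ZMod n)ˣ := ⟨((v:ℤ) : ZMod n), ((a:ℤ) : ZMod n), hva, by rw [mul_comm]; exact hva⟩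
    have iso := isoScale U ((a:ℤ) : ZMod n) ((b:ℤ) : ZMod n)
    have e1 : (U : ZMod n) * ((a:ℤ) : ZMod n) = 1 := hva
    have e2 : (U : ZMod n) * ((b:ℤ) : ZMod n) = ((n / 2 - 1 : ℕ) : ZMod n) := by
      have hk := keycong a b v w habc haodd hvw
      rw [htar, ← hk]
      show ((v:ℤ) : ZMod n) * ((b:ℤ) : ZMod n) = _
      push_cast
      ring
    rw [e1, e2] at iso
    exact ⟨iso⟩

end Stmt15

/-- For `n ≥ 1`, `k ≠ l`, `gcd(n,k,l) = 1`: if conditions (B) and (C) fail and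
condition (D) holds, then `n` is even and `G_n(x_0 x_k x_l)` is isomorphic to
`G_n(x_0 x_1 x_{n/2-1})`, i.e. to `Γ_n`. -/
theorem stmt15 (n : ℕ) (hn : 1 ≤ n) (k l : ℤ)
    (hk0 : 0 ≤ k) (hkn : k < n) (hl0 : 0 ≤ l) (hln : l < n) (hkl : k ≠ l)
    (hgcd : Int.gcd (n : ℤ) (Int.gcd k l) = 1)
    (hB : ¬((n : ℤ) ∣ k + l ∨ (n : ℤ) ∣ 2 * l - k ∨ (n : ℤ) ∣ 2 * k - l))
    (hC : ¬((n : ℤ) ∣ 3 * l ∨ (n : ℤ) ∣ 3 * k ∨ (n : ℤ) ∣ 3 * (l - k)))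
    (hD : (n : ℤ) ∣ 2 * (k + l) ∨ (n : ℤ) ∣ 2 * (2 * l - k) ∨ (n : ℤ) ∣ 2 * (2 * k - l)) :
    Even n ∧
      Nonempty (G n (k : ZMod n) (l : ZMod n) ≃*
        G n (1 : ZMod n) ((n / 2 - 1 : ℕ) : ZMod n)) := by
  push_neg at hB
  obtain ⟨hB1, hB2, hB3⟩ := hB
  rcases hD with h | h | h
  · exact Stmt15.main_red n hn k l hgcd hB1 h
  · -- use two cyclic shifts: pair (-l, k-l)
    have hab : ¬ (n:ℤ) ∣ (-l + (k-l)) := by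
      intro hd
      rw [show -l + (k-l) = -(2*l - k) by ring] at hd
      exact hB2 (dvd_neg.mp hd)
    have h2' : (n:ℤ) ∣ 2*(-l + (k-l)) := by
      rw [show 2*(-l + (k-l)) = -(2*(2*l - k)) by ring]
      exact dvd_neg.mpr h
    have hg' : Int.gcd (n:ℤ) (Int.gcd (-l) (k-l)) = 1 := by
      have dR : ((Int.gcd (n:ℤ) (Int.gcd (-l) (k-l)) : ℕ) : ℤ) ∣
          ((Int.gcd (-l) (k-l) : ℕ) : ℤ) := Int.gcd_dvd_right _ _
      have dl : ((Int.gcd (n:ℤ) (Int.gcd (-l) (k-l)) : ℕ) : ℤ) ∣ -l :=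
        dR.trans (Int.gcd_dvd_left _ _)
      have dkl : ((Int.gcd (n:ℤ) (Int.gcd (-l) (k-l)) : ℕ) : ℤ) ∣ (k-l) :=
        dR.trans (Int.gcd_dvd_right _ _)
      refine Stmt15.gcd_aux hgcd ?_ ?_
      · have hsub := dvd_sub dkl dl
        rwa [show k - l - -l = k by ring] at hsub
      · exact dvd_neg.mp dl
    obtain ⟨he, ⟨iso2⟩⟩ := Stmt15.main_red n hn (-l) (k-l) hg' hab h2'
    refine ⟨he, ?_⟩
    have c1 := Stmt15.isoCyc (n := n) ((k:ℤ) : ZMod n) ((l:ℤ) : ZMod n)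
    have c2 := Stmt15.isoCyc (n := n) (((l:ℤ) : ZMod n) - ((k:ℤ) : ZMod n)) (-((k:ℤ) : ZMod n))
    rw [show (-((k:ℤ) : ZMod n)) - (((l:ℤ) : ZMod n) - ((k:ℤ) : ZMod n)) = ((-l : ℤ) : ZMod n)
          by push_cast; ring,
        show -(((l:ℤ) : ZMod n) - ((k:ℤ) : ZMod n)) = ((k - l : ℤ) : ZMod n)
          by push_cast; ring] at c2
    exact ⟨(c1.trans c2).trans iso2⟩
  · -- one cyclic shift: pair (l-k, -k)
    have hab : ¬ (n:ℤ) ∣ ((l-k) + (-k)) := by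
      intro hd
      rw [show (l-k) + (-k) = -(2*k - l) by ring] at hd
      exact hB3 (dvd_neg.mp hd)
    have h2' : (n:ℤ) ∣ 2*((l-k) + (-k)) := by
      rw [show 2*((l-k) + (-k)) = -(2*(2*k - l)) by ring]
      exact dvd_neg.mpr h
    have hg' : Int.gcd (n:ℤ) (Int.gcd (l-k) (-k)) = 1 := by
      have dR : ((Int.gcd (n:ℤ) (Int.gcd (l-k) (-k)) : ℕ) : ℤ) ∣
          ((Int.gcd (l-k) (-k) : ℕ) : ℤ) := Int.gcd_dvd_right _ _
      have dlk : ((Int.gcd (n:ℤ) (Int.gcd (l-k) (-k)) : ℕ) : ℤ) ∣ (l-k) :=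
        dR.trans (Int.gcd_dvd_left _ _)
      have dk : ((Int.gcd (n:ℤ) (Int.gcd (l-k) (-k)) : ℕ) : ℤ) ∣ -k :=
        dR.trans (Int.gcd_dvd_right _ _)
      refine Stmt15.gcd_aux hgcd (dvd_neg.mp dk) ?_
      have hsub := dvd_sub dlk (dvd_neg.mpr (dvd_neg.mp dk))
      rwa [show l - k - -k = l by ring] at hsub
    obtain ⟨he, ⟨iso2⟩⟩ := Stmt15.main_red n hn (l-k) (-k) hg' hab h2'
    refine ⟨he, ?_⟩
    have c1 := Stmt15.isoCyc (n := n) ((k:ℤ) : ZMod n) ((l:ℤ) : ZMod n)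
    rw [show ((l:ℤ) : ZMod n) - ((k:ℤ) : ZMod n) = ((l - k : ℤ) : ZMod n) by push_cast; ring,
        show -((k:ℤ) : ZMod n) = ((-k : ℤ) : ZMod n) by push_cast; ring] at c1
    exact ⟨c1.trans iso2⟩
end

section
/- Let n ≥ 1 and let k, l be integers with 0 ≤ k, l < n, k ≠ l and gcd(n, k, l) = 1. Suppose conditions (A) and (B) both hold, i.e.: 3 divides n and 3 divides k+l; and n divides at least one of k+l, 2l−k, 2k−l. Then the cyclically presented group G_n(x_0 x_k x_l) is isomorphic to the free product ℤ * ℤ, i.e. to the free group of rank 2. -/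
section helpers

variable {H : Type*} [Group H]

lemma helpA {A B C D : H} (h1 : A * B * C = 1) (h2 : B * C * D = 1) : D = A := by
  have hbc : B * C = A⁻¹ := eq_inv_of_mul_eq_one_right (by rw [← mul_assoc]; exact h1)
  have hd : D = (B * C)⁻¹ := eq_inv_of_mul_eq_one_right h2
  rw [hd, hbc, inv_inv]

lemma helpB {A B C D : H} (h1 : B * C * A = 1) (h2 : C * D * B = 1) : D = A := by
  have ha : A = (B * C)⁻¹ := eq_inv_of_mul_eq_one_right h1
  have hdb : D * B = C⁻¹ := eq_inv_of_mul_eq_one_right (by rw [← mul_assoc]; exact h2)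
  have hd : D = C⁻¹ * B⁻¹ := by rw [← hdb]; group
  rw [hd, ha, mul_inv_rev]

lemma helpC {A B C D : H} (h1 : A * C * B = 1) (h2 : B * D * C = 1) : D = A := by
  have hcb : C * B = A⁻¹ := eq_inv_of_mul_eq_one_right (by rw [← mul_assoc]; exact h1)
  have hdc : D * C = B⁻¹ := eq_inv_of_mul_eq_one_right (by rw [← mul_assoc]; exact h2)
  have hd : D = B⁻¹ * C⁻¹ := by rw [← hdc]; group
  rw [hd, ← mul_inv_rev, hcb, inv_inv]

/-- An integer coprime to `n` gives a unit of `ZMod n`. -/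
lemma isUnit_intCast_of_gcd_eq_one (n : ℕ) (k : ℤ) (h : Int.gcd k n = 1) :
    IsUnit ((k : ZMod n)) := by
  obtain ⟨a, b, hab⟩ := Int.isCoprime_iff_gcd_eq_one.mpr h
  have h' : ((a * k + b * (n : ℤ) : ℤ) : ZMod n) = 1 := by rw [hab]; exact Int.cast_one
  push_cast at h'
  rw [ZMod.natCast_self, mul_zero, add_zero] at h'
  exact IsUnit.of_mul_eq_one _ (by rw [mul_comm]; exact h')

end helpers

/-- For `n ≥ 1`, `k ≠ l`, `gcd(n,k,l) = 1`: if conditions (A) and (B) both hold,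
then `G_n(x_0 x_k x_l)` is isomorphic to the free product `ℤ * ℤ`, i.e. the free
group of rank 2. -/
theorem stmt16 (n : ℕ) (hn : 1 ≤ n) (k l : ℤ)
    (hk0 : 0 ≤ k) (hkn : k < n) (hl0 : 0 ≤ l) (hln : l < n) (hkl : k ≠ l)
    (hgcd : Int.gcd (n : ℤ) (Int.gcd k l) = 1)
    (hA : 3 ∣ n ∧ (3 : ℤ) ∣ k + l)
    (hB : (n : ℤ) ∣ k + l ∨ (n : ℤ) ∣ 2 * l - k ∨ (n : ℤ) ∣ 2 * k - l) :
    Nonempty (G n (k : ZMod n) (l : ZMod n) ≃* FreeGroup (Fin 2)) := by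
  obtain ⟨hA3n, hA3kl⟩ := hA
  haveI : NeZero n := ⟨by omega⟩
  set κ : ZMod n := (k : ZMod n) with hκ
  set μ : ZMod n := (l : ZMod n) with hμ
  set e : ZMod n →+* ZMod 3 := ZMod.castHom hA3n (ZMod 3) with he
  set X : ZMod n → G n κ μ := fun i => PresentedGroup.of i with hX
  -- all relators hold in G
  have rel : ∀ i : ZMod n, X i * X (i + κ) * X (i + μ) = 1 := by
    intro i
    have hm : (FreeGroup.of i * FreeGroup.of (i + κ) * FreeGroup.of (i + μ)) ∈
        Subgroup.normalClosure (gRels n κ μ) :=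
      Subgroup.subset_normalClosure ⟨i, rfl⟩
    have : X i * X (i + κ) * X (i + μ) =
        PresentedGroup.mk (gRels n κ μ) (FreeGroup.of i * FreeGroup.of (i + κ) *
          FreeGroup.of (i + μ)) := by
      rw [map_mul, map_mul]; rfl
    rw [this]
    exact (QuotientGroup.eq_one_iff _).2 hm
  -- mod 3 facts
  have h3nZ : (3 : ℤ) ∣ (n : ℤ) := by exact_mod_cast Int.natCast_dvd_natCast.mpr hA3n
  have hek : e κ = ((k : ℤ) : ZMod 3) := map_intCast e k
  have hel : e μ = ((l : ℤ) : ZMod 3) := map_intCast e l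
  have hk3 : ((k : ℤ) : ZMod 3) ≠ 0 := by
    intro h
    have h3k : (3 : ℤ) ∣ k := (ZMod.intCast_zmod_eq_zero_iff_dvd k 3).mp h
    have h3l : (3 : ℤ) ∣ l := by
      have := hA3kl.sub h3k
      simpa using this
    have hd : (3 : ℤ) ∣ ((Int.gcd (n : ℤ) (Int.gcd k l) : ℕ) : ℤ) :=
      Int.dvd_coe_gcd h3nZ (Int.dvd_coe_gcd h3k h3l)
    rw [hgcd] at hd
    norm_num at hd
  have hsum3 : ((k : ℤ) : ZMod 3) + ((l : ℤ) : ZMod 3) = 0 := by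
    have : ((k + l : ℤ) : ZMod 3) = 0 := (ZMod.intCast_zmod_eq_zero_iff_dvd _ 3).mpr hA3kl
    push_cast at this
    exact this
  have hl3k : ((l : ℤ) : ZMod 3) = -((k : ℤ) : ZMod 3) := eq_neg_of_add_eq_zero_right hsum3
  -- the period element
  obtain ⟨u, hu, hper⟩ : ∃ u : ZMod n, IsUnit u ∧ ∀ i, X (i + 3 * u) = X i := by
    rcases hB with hd | hd | hd
    · -- μ = -κ, u = κ
      have hμκ : μ = -κ := by
        have h0 : ((k + l : ℤ) : ZMod n) = 0 := (ZMod.intCast_zmod_eq_zero_iff_dvd _ n).mpr hd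
        push_cast at h0
        exact eq_neg_of_add_eq_zero_right h0
      have hgkn : Int.gcd k n = 1 := by
        have h1 : ((Int.gcd k (n : ℤ) : ℕ) : ℤ) ∣ k := Int.gcd_dvd_left _ _
        have h2 : ((Int.gcd k (n : ℤ) : ℕ) : ℤ) ∣ (n : ℤ) := Int.gcd_dvd_right _ _
        have h3 : ((Int.gcd k (n : ℤ) : ℕ) : ℤ) ∣ l := by
          have := (h2.trans hd).sub h1
          simpa using this
        have h4 := Int.dvd_coe_gcd h2 (Int.dvd_coe_gcd h1 h3)
        rw [hgcd] at h4
        exact Nat.dvd_one.mp (by exact_mod_cast h4)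
      refine ⟨κ, isUnit_intCast_of_gcd_eq_one n k hgkn, fun i => ?_⟩
      have h1 := rel (i + κ)
      have h2 := rel (i + 2 * κ)
      rw [show i + κ + κ = i + 2 * κ by ring, show i + κ + μ = i by rw [hμκ]; ring] at h1
      rw [show i + 2 * κ + κ = i + 3 * κ by ring,
        show i + 2 * κ + μ = i + κ by rw [hμκ]; ring] at h2
      exact helpB h1 h2
    · -- κ = 2μ, u = μ
      have hκμ : κ = 2 * μ := by
        have h0 : ((2 * l - k : ℤ) : ZMod n) = 0 := (ZMod.intCast_zmod_eq_zero_iff_dvd _ n).mpr hd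
        push_cast at h0
        have := sub_eq_zero.mp h0
        exact this.symm
      have hgln : Int.gcd l n = 1 := by
        have h1 : ((Int.gcd l (n : ℤ) : ℕ) : ℤ) ∣ l := Int.gcd_dvd_left _ _
        have h2 : ((Int.gcd l (n : ℤ) : ℕ) : ℤ) ∣ (n : ℤ) := Int.gcd_dvd_right _ _
        have h3 : ((Int.gcd l (n : ℤ) : ℕ) : ℤ) ∣ k := by
          have := (h1.mul_left 2).sub (h2.trans hd)
          simpa using this
        have h4 := Int.dvd_coe_gcd h2 (Int.dvd_coe_gcd h3 h1)
        rw [hgcd] at h4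
        exact Nat.dvd_one.mp (by exact_mod_cast h4)
      refine ⟨μ, isUnit_intCast_of_gcd_eq_one n l hgln, fun i => ?_⟩
      have h1 := rel i
      have h2 := rel (i + μ)
      rw [show i + κ = i + 2 * μ by rw [hκμ]] at h1
      rw [show i + μ + κ = i + 3 * μ by rw [hκμ]; ring,
        show i + μ + μ = i + 2 * μ by ring] at h2
      exact helpC h1 h2
    · -- μ = 2κ, u = κ
      have hμκ : μ = 2 * κ := by
        have h0 : ((2 * k - l : ℤ) : ZMod n) = 0 := (ZMod.intCast_zmod_eq_zero_iff_dvd _ n).mpr hd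
        push_cast at h0
        have := sub_eq_zero.mp h0
        exact this.symm
      have hgkn : Int.gcd k n = 1 := by
        have h1 : ((Int.gcd k (n : ℤ) : ℕ) : ℤ) ∣ k := Int.gcd_dvd_left _ _
        have h2 : ((Int.gcd k (n : ℤ) : ℕ) : ℤ) ∣ (n : ℤ) := Int.gcd_dvd_right _ _
        have h3 : ((Int.gcd k (n : ℤ) : ℕ) : ℤ) ∣ l := by
          have := (h1.mul_left 2).sub (h2.trans hd)
          simpa using this
        have h4 := Int.dvd_coe_gcd h2 (Int.dvd_coe_gcd h1 h3)
        rw [hgcd] at h4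
        exact Nat.dvd_one.mp (by exact_mod_cast h4)
      refine ⟨κ, isUnit_intCast_of_gcd_eq_one n k hgkn, fun i => ?_⟩
      have h1 := rel i
      have h2 := rel (i + κ)
      rw [show i + μ = i + 2 * κ by rw [hμκ]] at h1
      rw [show i + κ + κ = i + 2 * κ by ring,
        show i + κ + μ = i + 3 * κ by rw [hμκ]; ring] at h2
      exact helpA h1 h2
  -- spread periodicity
  have periodN : ∀ (m : ℕ) (i : ZMod n), X (i + 3 * u * (m : ZMod n)) = X i := by
    intro m
    induction m with
    | zero => intro i; simp
    | succ t ih =>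
      intro i
      rw [show i + 3 * u * (((t + 1 : ℕ)) : ZMod n) = (i + 3 * u * ((t : ℕ) : ZMod n)) + 3 * u by
        push_cast; ring, hper, ih]
  have congrX : ∀ i j : ZMod n, e i = e j → X i = X j := by
    intro i j hij
    have h0 : e (i - j) = 0 := by rw [map_sub, hij, sub_self]
    have hvv : (((i - j).val : ℕ) : ZMod n) = i - j := ZMod.natCast_zmod_val _
    have h03 : (((i - j).val : ℕ) : ZMod 3) = 0 := by
      rw [← map_natCast e ((i - j).val), hvv]
      exact h0
    obtain ⟨c, hc⟩ := (ZMod.natCast_eq_zero_iff _ 3).mp h03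
    have hij3 : i - j = 3 * ((c : ℕ) : ZMod n) := by
      rw [← hvv, hc]; push_cast; ring
    set v : ZMod n := (hu.unit⁻¹ : (ZMod n)ˣ) * ((c : ℕ) : ZMod n) with hv
    have huv : u * v = ((c : ℕ) : ZMod n) := by
      rw [hv, ← mul_assoc]
      have : u * (hu.unit⁻¹ : (ZMod n)ˣ) = 1 := by
        simpa only [hu.unit_spec] using hu.unit.mul_inv
      rw [this, one_mul]
    have hidx : i = j + 3 * u * ((v.val : ℕ) : ZMod n) := by
      rw [ZMod.natCast_zmod_val, mul_assoc, huv, ← hij3]; ring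
    rw [hidx, periodN]
  -- target generators
  set a : FreeGroup (Fin 2) := FreeGroup.of 0 with ha
  set b : FreeGroup (Fin 2) := FreeGroup.of 1 with hb
  set g : ZMod 3 → FreeGroup (Fin 2) :=
    fun t => if t = 0 then a else if t = ((k : ℤ) : ZMod 3) then b else b⁻¹ * a⁻¹ with hg
  -- evaluation of g
  have hg0 : g 0 = a := if_pos rfl
  have hgk : g ((k : ℤ) : ZMod 3) = b := by
    rw [hg]; simp [hk3]
  have hk12 : ((k : ℤ) : ZMod 3) = 1 ∨ ((k : ℤ) : ZMod 3) = 2 := by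
    have h3 : ∀ s : ZMod 3, s = 0 ∨ s = 1 ∨ s = 2 := by decide
    rcases h3 ((k : ℤ) : ZMod 3) with h | h | h
    · exact absurd h hk3
    · exact Or.inl h
    · exact Or.inr h
  have hgl : g (-((k : ℤ) : ZMod 3)) = b⁻¹ * a⁻¹ := by
    have h1 : -((k : ℤ) : ZMod 3) ≠ 0 := by
      rcases hk12 with h | h <;> rw [h] <;> decide
    have h2 : -((k : ℤ) : ZMod 3) ≠ ((k : ℤ) : ZMod 3) := by
      rcases hk12 with h | h <;> rw [h] <;> decide
    rw [hg]; simp [h1, h2]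
  set f : ZMod n → FreeGroup (Fin 2) := fun i => g (e i) with hf
  have hrels : ∀ r ∈ gRels n κ μ, FreeGroup.lift f r = 1 := by
    rintro r ⟨i, rfl⟩
    rw [map_mul, map_mul, FreeGroup.lift_apply_of, FreeGroup.lift_apply_of, FreeGroup.lift_apply_of]
    show g (e i) * g (e (i + κ)) * g (e (i + μ)) = 1
    rw [map_add, map_add, hek, hel, hl3k]
    have htri : e i = 0 ∨ e i = ((k : ℤ) : ZMod 3) ∨ e i = -((k : ℤ) : ZMod 3) := by
      have : ∀ s t : ZMod 3, s ≠ 0 → (t = 0 ∨ t = s ∨ t = -s) := by decide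
      exact this _ _ hk3
    have hss : ∀ s : ZMod 3, s + s = -s := by decide
    rcases htri with h | h | h <;> rw [h]
    · rw [zero_add, zero_add, hg0, hgk, hgl]; group
    · rw [show ((k : ℤ) : ZMod 3) + ((k : ℤ) : ZMod 3) = -((k : ℤ) : ZMod 3) from hss _,
        add_neg_cancel, hgk, hgl, hg0]; group
    · rw [neg_add_cancel,
        show -((k : ℤ) : ZMod 3) + -((k : ℤ) : ZMod 3) = ((k : ℤ) : ZMod 3) from by
          rw [hss, neg_neg], hgl, hg0, hgk]; group
  set φ : G n κ μ →* FreeGroup (Fin 2) := PresentedGroup.toGroup hrels with hφ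
  set ψ : FreeGroup (Fin 2) →* G n κ μ :=
    FreeGroup.lift (fun j : Fin 2 => if j = 0 then X 0 else X κ) with hψ
  have hψa : ψ a = X 0 := by rw [ha, hψ, FreeGroup.lift_apply_of]; simp
  have hψb : ψ b = X κ := by
    rw [hb, hψ, FreeGroup.lift_apply_of]
    norm_num
  have hcomp1 : ψ.comp φ = MonoidHom.id (G n κ μ) := by
    ext x
    rw [MonoidHom.comp_apply, MonoidHom.id_apply]
    have hφx : φ (PresentedGroup.of x) = g (e x) := PresentedGroup.toGroup.of hrels
    rw [hφx]
    have htri : e x = 0 ∨ e x = ((k : ℤ) : ZMod 3) ∨ e x = -((k : ℤ) : ZMod 3) := by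
      have : ∀ s t : ZMod 3, s ≠ 0 → (t = 0 ∨ t = s ∨ t = -s) := by decide
      exact this _ _ hk3
    have hofx : (PresentedGroup.of x : G n κ μ) = X x := rfl
    rcases htri with h | h | h <;> rw [h]
    · rw [hg0, hψa, hofx]
      exact (congrX x 0 (by rw [h, map_zero])).symm
    · rw [hgk, hψb, hofx]
      exact (congrX x κ (by rw [h, hek])).symm
    · rw [hgl, map_mul, map_inv, map_inv, hψa, hψb, hofx]
      have hrel0 := rel 0
      rw [zero_add, zero_add] at hrel0
      have hXμ : X μ = (X κ)⁻¹ * (X 0)⁻¹ := by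
        have h1 : X κ * X μ = (X 0)⁻¹ :=
          eq_inv_of_mul_eq_one_right (by rw [← mul_assoc]; exact hrel0)
        have h2 : X μ = (X κ)⁻¹ * ((X κ) * X μ) := by group
        rw [h2, h1]
      rw [← hXμ]
      exact (congrX x μ (by rw [h, hel, hl3k])).symm
  have hcomp2 : φ.comp ψ = MonoidHom.id (FreeGroup (Fin 2)) := by
    apply FreeGroup.ext_hom
    intro j
    rw [MonoidHom.comp_apply, MonoidHom.id_apply, hψ, FreeGroup.lift_apply_of]
    fin_cases j
    · show φ (if (0 : Fin 2) = 0 then X 0 else X κ) = a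
      rw [if_pos rfl]
      have : φ (X 0) = g (e 0) := PresentedGroup.toGroup.of hrels
      rw [this, map_zero, hg0]
    · show φ (if (1 : Fin 2) = 0 then X 0 else X κ) = b
      rw [if_neg (by decide : (1 : Fin 2) ≠ 0)]
      have : φ (X κ) = g (e κ) := PresentedGroup.toGroup.of hrels
      rw [this, hek, hgk]
  exact ⟨MonoidHom.toMulEquiv φ ψ hcomp1 hcomp2⟩
end

section
/- Let n ≥ 1 and let k, l be integers with 0 ≤ k, l < n, k ≠ l and gcd(n, k, l) = 1. Suppose condition (A) fails, condition (B) holds and condition (C) fails, i.e.: it is not the case that both 3 divides n and 3 divides k+l; n divides at least one of k+l, 2l−k, 2k−l; and n divides none of 3l, 3k, 3(l−k). Then the cyclically presented group G_n(x_0 x_k x_l) is isomorphic to the cyclic group ℤ/3ℤ. -/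
private lemma relG {n : ℕ} (K L : ZMod n) (i : ZMod n) :
    (PresentedGroup.of i : G n K L) * PresentedGroup.of (i + K) * PresentedGroup.of (i + L)
      = 1 := by
  have hm : (FreeGroup.of i * FreeGroup.of (i + K) * FreeGroup.of (i + L))
      ∈ Subgroup.normalClosure (gRels n K L) :=
    Subgroup.subset_normalClosure ⟨i, rfl⟩
  show PresentedGroup.mk _ (FreeGroup.of i) * PresentedGroup.mk _ (FreeGroup.of (i + K)) *
      PresentedGroup.mk _ (FreeGroup.of (i + L)) = 1
  rw [← map_mul, ← map_mul]
  exact (QuotientGroup.eq_one_iff _).mpr hm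

private lemma shift_const {n : ℕ} [NeZero n] {H : Type*} [Group H] (g : ZMod n → H)
    {u : ZMod n} (hu : IsUnit u) (hs : ∀ i, g i = g (i + u)) (i : ZMod n) : g i = g 0 := by
  have key : ∀ (m : ℕ) (j : ZMod n), g j = g (j + (m : ZMod n) * u) := by
    intro m
    induction m with
    | zero => intro j; simp
    | succ m ih =>
      intro j
      have h1 : j + (((m : ℕ) + 1 : ℕ) : ZMod n) * u = (j + (m : ZMod n) * u) + u := by
        push_cast; ring
      rw [h1, ← hs (j + (m : ZMod n) * u)]
      exact ih j
  obtain ⟨v, hv⟩ := hu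
  set c : ZMod n := (-i) * ↑v⁻¹ with hc
  have hcu : c * u = -i := by
    rw [hc, ← hv, mul_assoc, Units.inv_mul, mul_one]
  have h0 : i + ((c.val : ℕ) : ZMod n) * u = 0 := by
    rw [ZMod.natCast_rightInverse c, hcu]; ring
  rw [← h0]
  exact key c.val i

/-- If all generators are shifted-equal by a unit, the group is `ℤ/3`. -/
private lemma main_of_shift {n : ℕ} [NeZero n] (K L : ZMod n) {u : ZMod n} (hu : IsUnit u)
    (hs : ∀ i : ZMod n, (PresentedGroup.of i : G n K L) = PresentedGroup.of (i + u)) :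
    Nonempty (G n K L ≃* Multiplicative (ZMod 3)) := by
  set g : ZMod n → G n K L := PresentedGroup.of with hg
  have const : ∀ i : ZMod n, g i = g 0 := shift_const g hu hs
  have cube : g 0 ^ 3 = 1 := by
    have h := relG K L 0
    rw [show (PresentedGroup.of (0 + K) : G n K L) = g (0 + K) from rfl,
      show (PresentedGroup.of (0 + L) : G n K L) = g (0 + L) from rfl,
      show (PresentedGroup.of (0:ZMod n) : G n K L) = g 0 from rfl,
      const (0 + K), const (0 + L)] at h
    rw [pow_succ, pow_succ, pow_one]
    exact h
  have hrel : ∀ r ∈ gRels n K L,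
      FreeGroup.lift (fun _ : ZMod n => Multiplicative.ofAdd (1 : ZMod 3)) r = 1 := by
    rintro r ⟨i, rfl⟩
    simp only [map_mul, FreeGroup.lift_apply_of]
    decide
  let φ : G n K L →* Multiplicative (ZMod 3) := PresentedGroup.toGroup hrel
  have hφg : φ (g 0) = Multiplicative.ofAdd (1 : ZMod 3) := PresentedGroup.toGroup.of hrel
  have surj : Function.Surjective φ := by
    intro z
    refine ⟨g 0 ^ (Multiplicative.toAdd z).val, ?_⟩
    rw [map_pow, hφg, ← ofAdd_nsmul]
    have hval : (Multiplicative.toAdd z).val • (1 : ZMod 3) = Multiplicative.toAdd z := by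
      rw [nsmul_eq_mul, mul_one]
      exact ZMod.natCast_rightInverse _
    rw [hval]
    rfl
  have gen : ∀ x : G n K L, ∃ m : ℤ, x = g 0 ^ m := by
    intro x
    have hx : x ∈ Subgroup.zpowers (g 0) := by
      refine PresentedGroup.generated_by _ _ (fun j => ?_) x
      rw [show (PresentedGroup.of j : G n K L) = g j from rfl, const j]
      exact Subgroup.mem_zpowers _
    obtain ⟨m, hm⟩ := Subgroup.mem_zpowers_iff.mp hx
    exact ⟨m, hm.symm⟩
  have inj : Function.Injective φ := by
    rw [injective_iff_map_eq_one]
    intro x hx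
    obtain ⟨m, rfl⟩ := gen x
    rw [map_zpow, hφg, ← ofAdd_zsmul] at hx
    have hz : (m : ZMod 3) = 0 := by
      have := Multiplicative.ofAdd.injective (hx.trans (ofAdd_zero).symm)
      rwa [zsmul_eq_mul, mul_one] at this
    obtain ⟨c, rfl⟩ := (ZMod.intCast_zmod_eq_zero_iff_dvd m 3).mp hz
    rw [show ((3:ℕ):ℤ) = (3:ℤ) from rfl, zpow_mul, show (3:ℤ) = ((3:ℕ):ℤ) from rfl,
      zpow_natCast, cube, one_zpow]
  exact ⟨MulEquiv.ofBijective φ ⟨inj, surj⟩⟩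

private lemma gcd_aux {n k l : ℤ} (hgcd : Int.gcd n (Int.gcd k l) = 1) {a : ℤ}
    (h1 : (↑(Int.gcd n a) : ℤ) ∣ k) (h2 : (↑(Int.gcd n a) : ℤ) ∣ l) : Int.gcd n a = 1 := by
  have h3 : (↑(Int.gcd n a) : ℤ) ∣ (↑(Int.gcd k l) : ℤ) := Int.dvd_coe_gcd h1 h2
  have h4 : (↑(Int.gcd n a) : ℤ) ∣ (↑(Int.gcd n (Int.gcd k l)) : ℤ) :=
    Int.dvd_coe_gcd ((Int.gcd_dvd_left _ _)) h3
  rw [hgcd] at h4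
  exact Nat.dvd_one.mp (by exact_mod_cast h4)

private lemma unit_int {n : ℕ} (a : ℤ) (ha : 0 ≤ a) (h : Int.gcd (n : ℤ) a = 1) :
    IsUnit (a : ZMod n) := by
  have h1 : ((a.toNat : ℕ) : ZMod n) = ((a : ℤ) : ZMod n) := by
    rw [← Int.cast_natCast, Int.toNat_of_nonneg ha]
  rw [← h1, ZMod.isUnit_iff_coprime]
  have h2 : a.natAbs = a.toNat := by omega
  unfold Nat.Coprime
  rw [Nat.gcd_comm]
  simpa [Int.gcd, h2] using h

set_option maxHeartbeats 1000000 in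
/-- For `n ≥ 1`, `k ≠ l`, `gcd(n,k,l) = 1`: if condition (A) fails, (B) holds and
(C) fails, then `G_n(x_0 x_k x_l)` is isomorphic to the cyclic group `ℤ/3ℤ`. -/
theorem stmt19 (n : ℕ) (hn : 1 ≤ n) (k l : ℤ)
    (hk0 : 0 ≤ k) (hkn : k < n) (hl0 : 0 ≤ l) (hln : l < n) (hkl : k ≠ l)
    (hgcd : Int.gcd (n : ℤ) (Int.gcd k l) = 1)
    (hA : ¬(3 ∣ n ∧ (3 : ℤ) ∣ k + l))
    (hB : (n : ℤ) ∣ k + l ∨ (n : ℤ) ∣ 2 * l - k ∨ (n : ℤ) ∣ 2 * k - l)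
    (hC : ¬((n : ℤ) ∣ 3 * l ∨ (n : ℤ) ∣ 3 * k ∨ (n : ℤ) ∣ 3 * (l - k))) :
    Nonempty (G n (k : ZMod n) (l : ZMod n) ≃* Multiplicative (ZMod 3)) := by
  haveI : NeZero n := ⟨by omega⟩
  set K : ZMod n := (k : ZMod n) with hK
  set L : ZMod n := (l : ZMod n) with hLdef
  have rel := relG K L
  have unit3 : ¬ 3 ∣ n → IsUnit (3 : ZMod n) := by
    intro h
    have := ZMod.isUnit_prime_of_not_dvd Nat.prime_three h
    simpa using this
  rcases hB with hB | hB | hB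
  · -- n ∣ k + l :  L = -K
    have hnk : Int.gcd (n : ℤ) k = 1 := by
      refine gcd_aux hgcd ((Int.gcd_dvd_right _ _)) ?_
      have h1 : (↑(Int.gcd (n:ℤ) k) : ℤ) ∣ (k + l) := dvd_trans (Int.gcd_dvd_left _ _) hB
      have h2 : (↑(Int.gcd (n:ℤ) k) : ℤ) ∣ k := (Int.gcd_dvd_right _ _)
      simpa using dvd_sub h1 h2
    have h3n : ¬ 3 ∣ n := by
      intro h3
      obtain ⟨c, hc⟩ := hB
      refine hA ⟨h3, ?_⟩
      have h3' : (3:ℤ) ∣ (n:ℤ) := by exact_mod_cast h3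
      rw [hc]
      exact Dvd.dvd.mul_right h3' c
    have hL : L = -K := by
      have h0 : (((k + l : ℤ)) : ZMod n) = 0 := (ZMod.intCast_zmod_eq_zero_iff_dvd _ n).mpr hB
      push_cast at h0
      linear_combination h0
    have hu : IsUnit (3 * K : ZMod n) := (unit3 h3n).mul (unit_int k hk0 hnk)
    refine main_of_shift K L hu ?_
    intro i
    have h1 := rel (i + K)
    rw [show i + K + K = i + 2*K from by ring, show i + K + L = i from by rw [hL]; ring] at h1
    have h2 := rel (i + 2*K)
    rw [show i + 2*K + K = i + 3*K from by ring,
      show i + 2*K + L = i + K from by rw [hL]; ring] at h2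
    have e1 : (PresentedGroup.of i : G n K L)
        = (PresentedGroup.of (i+K) * PresentedGroup.of (i+2*K))⁻¹ :=
      eq_inv_of_mul_eq_one_right h1
    have e2a : (PresentedGroup.of (i+2*K) : G n K L) * PresentedGroup.of (i+3*K)
        = (PresentedGroup.of (i+K))⁻¹ := eq_inv_of_mul_eq_one_left h2
    have e2b := eq_inv_mul_of_mul_eq e2a
    rw [e1, e2b, mul_inv_rev]
  · -- n ∣ 2l - k :  K = 2L
    have hnl : Int.gcd (n : ℤ) l = 1 := by
      refine gcd_aux hgcd ?_ ((Int.gcd_dvd_right _ _))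
      have h1 : (↑(Int.gcd (n:ℤ) l) : ℤ) ∣ (2*l - k) := dvd_trans (Int.gcd_dvd_left _ _) hB
      have h2 : (↑(Int.gcd (n:ℤ) l) : ℤ) ∣ 2*l := ((Int.gcd_dvd_right _ _)).mul_left 2
      have := dvd_sub h2 h1
      rwa [sub_sub_cancel] at this
    have h3n : ¬ 3 ∣ n := by
      intro h3
      refine hA ⟨h3, ?_⟩
      obtain ⟨c, hc⟩ := hB
      obtain ⟨d, hd⟩ := h3
      have hnd : (n:ℤ) = 3 * d := by exact_mod_cast hd
      rw [hnd] at hc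
      exact ⟨l - d * c, by linarith⟩
    have hKL : K = 2*L := by
      have h0 : (((2*l - k : ℤ)) : ZMod n) = 0 := (ZMod.intCast_zmod_eq_zero_iff_dvd _ n).mpr hB
      push_cast at h0
      linear_combination -h0
    have hu : IsUnit (3 * L : ZMod n) := (unit3 h3n).mul (unit_int l hl0 hnl)
    refine main_of_shift K L hu ?_
    intro i
    have h1 := rel i
    rw [show i + K = i + 2*L from by rw [hKL]] at h1
    have h2 := rel (i + L)
    rw [show i + L + K = i + 3*L from by rw [hKL]; ring,
      show i + L + L = i + 2*L from by ring] at h2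
    have e1 : (PresentedGroup.of i : G n K L)
        = (PresentedGroup.of (i+2*L) * PresentedGroup.of (i+L))⁻¹ :=
      eq_inv_of_mul_eq_one_left (by rw [mul_assoc] at h1; exact h1)
    have e2a : (PresentedGroup.of (i+L) : G n K L) * PresentedGroup.of (i+3*L)
        = (PresentedGroup.of (i+2*L))⁻¹ := eq_inv_of_mul_eq_one_left h2
    have e2b := eq_inv_mul_of_mul_eq e2a
    rw [e1, e2b, mul_inv_rev]
  · -- n ∣ 2k - l :  L = 2K
    have hnk : Int.gcd (n : ℤ) k = 1 := by
      refine gcd_aux hgcd ((Int.gcd_dvd_right _ _)) ?_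
      have h1 : (↑(Int.gcd (n:ℤ) k) : ℤ) ∣ (2*k - l) := dvd_trans (Int.gcd_dvd_left _ _) hB
      have h2 : (↑(Int.gcd (n:ℤ) k) : ℤ) ∣ 2*k := ((Int.gcd_dvd_right _ _)).mul_left 2
      have := dvd_sub h2 h1
      rwa [sub_sub_cancel] at this
    have h3n : ¬ 3 ∣ n := by
      intro h3
      refine hA ⟨h3, ?_⟩
      obtain ⟨c, hc⟩ := hB
      obtain ⟨d, hd⟩ := h3
      have hnd : (n:ℤ) = 3 * d := by exact_mod_cast hd
      rw [hnd] at hc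
      exact ⟨k - d * c, by linarith⟩
    have hL : L = 2*K := by
      have h0 : (((2*k - l : ℤ)) : ZMod n) = 0 := (ZMod.intCast_zmod_eq_zero_iff_dvd _ n).mpr hB
      push_cast at h0
      linear_combination -h0
    have hu : IsUnit (3 * K : ZMod n) := (unit3 h3n).mul (unit_int k hk0 hnk)
    refine main_of_shift K L hu ?_
    intro i
    have h1 := rel i
    rw [show i + L = i + 2*K from by rw [hL]] at h1
    have h2 := rel (i + K)
    rw [show i + K + K = i + 2*K from by ring,
      show i + K + L = i + 3*K from by rw [hL]; ring] at h2
    have e1 : (PresentedGroup.of i : G n K L)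
        = (PresentedGroup.of (i+K) * PresentedGroup.of (i+2*K))⁻¹ :=
      eq_inv_of_mul_eq_one_left (by rw [mul_assoc] at h1; exact h1)
    have e2 : (PresentedGroup.of (i+3*K) : G n K L)
        = (PresentedGroup.of (i+K) * PresentedGroup.of (i+2*K))⁻¹ :=
      eq_inv_of_mul_eq_one_right h2
    rw [e1, e2]
end
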